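/- arXiv:2012.00148 — 14 statements merged into one kernel-verified Lean document; each statement's English description precedes it below -/
import Mathlib

section
/- Let (B, ≤, 0, +) be a distributive join-semilattice with 0, let m, i ≥ 1, and suppose x = s₁¹ + … + s₁ⁱ = … = s_m¹ + … + s_mⁱ, i.e. x is presented as m finite joins, with the entries of the j-th presentation being s_j¹, …, s_jⁱ. Then there exist elements t₁, …, tₙ such that x = t₁ + … + tₙ and for every j ∈ {1, …, n} there exist indices l₁, …, l_m ∈ {1, …, i} such that t_j ≤ s₁^{l₁}, t_j ≤ s₂^{l₂}, …, t_j ≤ s_m^{l_m}. -/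
theorem sup_decomp_aux {B : Type*} [SemilatticeSup B] [OrderBot B]
    (had : ∀ x a b : B, x ≤ a ⊔ b → ∃ a' b' : B, a' ≤ a ∧ b' ≤ b ∧ x = a' ⊔ b')
    {ι : Type*} [DecidableEq ι] (s : Finset ι) (f : ι → B) :
    ∀ x : B, x ≤ s.sup f → ∃ g : ι → B, (∀ a, g a ≤ f a) ∧ x = s.sup g := by
  induction s using Finset.induction_on with
  | empty =>
    intro x hx
    exact ⟨fun _ => ⊥, fun _ => bot_le,
      le_antisymm (by simpa using hx) bot_le⟩
  | @insert a s ha ih =>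
    intro x hx
    rw [Finset.sup_insert] at hx
    obtain ⟨a', b', ha', hb', hx'⟩ := had x _ _ hx
    obtain ⟨g, hg, hb'eq⟩ := ih b' hb'
    refine ⟨fun b => if b = a then a' else g b, ?_, ?_⟩
    · intro b
      by_cases h : b = a
      · simp [h, ha']
      · simpa [h] using hg b
    · rw [Finset.sup_insert]
      have : s.sup (fun b => if b = a then a' else g b) = s.sup g :=
        Finset.sup_congr rfl fun b hb => if_neg (fun h : b = a => ha (h ▸ hb))
      rw [this, if_pos rfl, hx', hb'eq]

theorem stmt_1_aux {B : Type*} [SemilatticeSup B] [OrderBot B]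
    (had : ∀ x a b : B, x ≤ a ⊔ b → ∃ a' b' : B, a' ≤ a ∧ b' ≤ b ∧ x = a' ⊔ b')
    (i : ℕ) (hi : 1 ≤ i) :
    ∀ (m : ℕ) (x : B) (s : Fin (m + 1) → Fin i → B),
      (∀ j, x = Finset.univ.sup (s j)) →
      ∃ (n : ℕ) (t : Fin n → B), 1 ≤ n ∧ x = Finset.univ.sup t ∧
        ∀ j : Fin n, ∃ l : Fin (m + 1) → Fin i, ∀ k : Fin (m + 1), t j ≤ s k (l k) := by
  intro m
  induction m with
  | zero =>
    intro x s hs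
    refine ⟨i, s 0, hi, hs 0, fun j => ⟨fun _ => j, fun k => ?_⟩⟩
    have : k = 0 := by omega
    subst this
    exact le_rfl
  | succ m ih =>
    intro x s hs
    obtain ⟨n, t, hn, hxt, hl⟩ := ih x (fun j => s j.castSucc) (fun j => hs j.castSucc)
    -- decompose each t j along the last presentation
    have hdec : ∀ j : Fin n, ∃ g : Fin i → B,
        (∀ k, g k ≤ s (Fin.last (m + 1)) k) ∧ t j = Finset.univ.sup g := by
      intro j
      apply sup_decomp_aux had Finset.univ (s (Fin.last (m + 1))) (t j)
      rw [← hs (Fin.last (m + 1)), hxt]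
      exact Finset.le_sup (Finset.mem_univ j)
    choose g hg hgt using hdec
    set e := finProdFinEquiv (m := n) (n := i)
    refine ⟨n * i, fun p => g (e.symm p).1 (e.symm p).2, ?_, ?_, ?_⟩
    · exact Nat.one_le_iff_ne_zero.mpr (by positivity)
    · rw [hxt]
      apply le_antisymm
      · apply Finset.sup_le
        intro j _
        rw [hgt j]
        apply Finset.sup_le
        intro k _
        have := Finset.le_sup (f := fun p => g (e.symm p).1 (e.symm p).2)
          (Finset.mem_univ (e (j, k)))
        simpa using this
      · apply Finset.sup_le
        intro p _
        rw [hxt.symm, hs (Fin.last (m + 1))]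
        exact le_trans (hg _ _) (Finset.le_sup (Finset.mem_univ _))
    · intro p
      obtain ⟨l, hlk⟩ := hl (e.symm p).1
      refine ⟨fun k => Fin.lastCases (e.symm p).2 l k, fun k => ?_⟩
      refine Fin.lastCases ?_ ?_ k
      · simpa using hg (e.symm p).1 (e.symm p).2
      · intro k'
        have h1 : g (e.symm p).1 (e.symm p).2 ≤ t (e.symm p).1 := by
          rw [hgt]
          exact Finset.le_sup (Finset.mem_univ _)
        have h2 := hlk k'
        simpa using le_trans h1 h2

/-- In a distributive join-semilattice with 0, if `x` is presented as
`m` finite joins of `i` elements each (`x = s_j¹ + … + s_jⁱ` for `j = 1,…,m`),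
then there are `t₁,…,tₙ` with `x = t₁ + … + tₙ` such that each `t_j` is below one
entry of every presentation. -/
theorem stmt_1 {B : Type*} [SemilatticeSup B] [OrderBot B]
    (had : ∀ x a b : B, x ≤ a ⊔ b → ∃ a' b' : B, a' ≤ a ∧ b' ≤ b ∧ x = a' ⊔ b')
    (m i : ℕ) (hm : 1 ≤ m) (hi : 1 ≤ i) (x : B) (s : Fin m → Fin i → B)
    (hs : ∀ j, x = Finset.univ.sup (s j)) :
    ∃ (n : ℕ) (t : Fin n → B), 1 ≤ n ∧ x = Finset.univ.sup t ∧
      ∀ j : Fin n, ∃ l : Fin m → Fin i, ∀ k : Fin m, t j ≤ s k (l k) := by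
  obtain ⟨m', rfl⟩ : ∃ m', m = m' + 1 := ⟨m - 1, (Nat.succ_pred_eq_of_pos hm).symm⟩
  exact stmt_1_aux had i hi m' x s hs
end

section
/- Every distributive contact join-semilattice satisfies the axiom schema A¹_{m,i} for all m, i ≥ 1: if xCy, x ≤ s₁, …, s_m, y ≤ t₁, …, t_m, and each s_j is presented as a finite join s_j = s_j¹ + … + s_jⁱ and each t_j as t_j = t_j¹ + … + t_jⁱ, then there exist indices l₁, …, l_m ∈ {1, …, i} and k₁, …, k_m ∈ {1, …, i} such that every two elements among s₁^{l₁}, …, s_m^{l_m} are in contact, every two elements among t₁^{k₁}, …, t_m^{k_m} are in contact, and every s_j^{l_j} is in contact with every t_u^{k_u}. -/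
/-- Every distributive contact join-semilattice satisfies the axiom
schema `A¹_{m,i}` for all `m, i ≥ 1`. -/
theorem stmt_2 {B : Type*} [SemilatticeSup B] [OrderBot B] [OrderTop B]
    (C : B → B → Prop)
    (h9 : ∀ a b : B, C a b → a ≠ ⊥)
    (h10 : ∀ a b : B, C a b → C b a)
    (h11 : ∀ a b c : B, C a (b ⊔ c) → C a b ∨ C a c)
    (h12 : ∀ a b b' : B, C a b → b ≤ b' → C a b')
    (h13 : ∀ a : B, a ≠ ⊥ → C a a)
    (had : ∀ x a b : B, x ≤ a ⊔ b → ∃ a' b' : B, a' ≤ a ∧ b' ≤ b ∧ x = a' ⊔ b')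
    (m i : ℕ) (hm : 1 ≤ m) (hi : 1 ≤ i)
    (x y : B) (s t : Fin m → B) (s' t' : Fin m → Fin i → B)
    (hxy : C x y) (hxs : ∀ j, x ≤ s j) (hyt : ∀ j, y ≤ t j)
    (hs : ∀ j, s j = Finset.univ.sup (s' j))
    (ht : ∀ j, t j = Finset.univ.sup (t' j)) :
    ∃ l k : Fin m → Fin i,
      (∀ j u, C (s' j (l j)) (s' u (l u))) ∧
      (∀ j u, C (t' j (k j)) (t' u (k u))) ∧
      (∀ j u, C (s' j (l j)) (t' u (k u))) := by
  classical
  -- iterated distributivity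
  have lemA : ∀ (S : Finset (Fin i)) (f : Fin i → B) (x : B), x ≤ S.sup f →
      ∃ g : Fin i → B, (∀ p ∈ S, g p ≤ f p) ∧ x = S.sup g := by
    intro S
    induction S using Finset.induction_on with
    | empty =>
      intro f x hx
      exact ⟨fun _ => ⊥, by simp, by simpa using le_bot_iff.mp (by simpa using hx)⟩
    | @insert a S ha ih =>
      intro f x hx
      rw [Finset.sup_insert] at hx
      obtain ⟨a', x₂, ha', hx₂, hxeq⟩ := had x (f a) (S.sup f) hx
      obtain ⟨g, hg, hx₂eq⟩ := ih f x₂ hx₂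
      refine ⟨Function.update g a a', ?_, ?_⟩
      · intro p hp
        rcases Finset.mem_insert.mp hp with rfl | hp
        · rw [Function.update_self]; exact ha'
        · rw [Function.update_of_ne (ne_of_mem_of_not_mem hp ha)]; exact hg p hp
      · have hsupeq : S.sup (Function.update g a a') = S.sup g :=
          Finset.sup_congr rfl
            (fun p hp => Function.update_of_ne (ne_of_mem_of_not_mem hp ha) _ _)
        rw [Finset.sup_insert, Function.update_self, hsupeq, ← hx₂eq, hxeq]
  -- iterated h11
  have lemB : ∀ (S : Finset (Fin i)) (f : Fin i → B) (q : B), C q (S.sup f) →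
      ∃ p ∈ S, C q (f p) := by
    intro S
    induction S using Finset.induction_on with
    | empty =>
      intro f q hq
      exact absurd rfl (h9 _ _ (h10 _ _ (by simpa using hq)))
    | @insert a S ha ih =>
      intro f q hq
      rw [Finset.sup_insert] at hq
      rcases h11 _ _ _ hq with h | h
      · exact ⟨a, Finset.mem_insert_self _ _, h⟩
      · obtain ⟨p, hp, hcp⟩ := ih f q h
        exact ⟨p, Finset.mem_insert_of_mem hp, hcp⟩
  -- refinement lemma
  have refine_lem : ∀ (S : Finset (Fin m)) (w : Fin m → Fin i → B) (p q : B),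
      C p q → (∀ j ∈ S, p ≤ Finset.univ.sup (w j)) →
      ∃ (p' : B) (l : Fin m → Fin i), p' ≤ p ∧ C p' q ∧ ∀ j ∈ S, p' ≤ w j (l j) := by
    intro S
    induction S using Finset.induction_on with
    | empty =>
      intro w p q hpq _
      exact ⟨p, fun _ => ⟨0, hi⟩, le_rfl, hpq, by simp⟩
    | @insert a S ha ih =>
      intro w p q hpq hle
      obtain ⟨g, hg, hpg⟩ :=
        lemA Finset.univ (w a) p (hle a (Finset.mem_insert_self _ _))
      have hq : C q (Finset.univ.sup g) := h10 _ _ (hpg ▸ hpq)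
      obtain ⟨la, _, hcla⟩ := lemB Finset.univ g q hq
      have hgp : g la ≤ p := hpg ▸ Finset.le_sup (Finset.mem_univ la)
      obtain ⟨p', l', hp'le, hp'q, hp'w⟩ := ih w (g la) q (h10 _ _ hcla)
        (fun j hj => le_trans hgp (hle j (Finset.mem_insert_of_mem hj)))
      refine ⟨p', Function.update l' a la, le_trans hp'le hgp, hp'q, ?_⟩
      intro j hj
      rcases Finset.mem_insert.mp hj with rfl | hj
      · rw [Function.update_self]
        exact le_trans hp'le (hg la (Finset.mem_univ la))
      · rw [Function.update_of_ne (ne_of_mem_of_not_mem hj ha)]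
        exact hp'w j hj
  obtain ⟨x', l, hx'x, hx'y, hx's⟩ := refine_lem Finset.univ s' x y hxy
    (fun j _ => (hs j ▸ hxs j))
  obtain ⟨y', k, hy'y, hy'x, hy't⟩ := refine_lem Finset.univ t' y x' (h10 _ _ hx'y)
    (fun j _ => (ht j ▸ hyt j))
  have hCx'y' : C x' y' := h10 _ _ hy'x
  have hx'ne : x' ≠ ⊥ := h9 _ _ hCx'y'
  have hy'ne : y' ≠ ⊥ := h9 _ _ (h10 _ _ hCx'y')
  have hxs' : ∀ j, x' ≤ s' j (l j) := fun j => hx's j (Finset.mem_univ j)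
  have hyt' : ∀ j, y' ≤ t' j (k j) := fun j => hy't j (Finset.mem_univ j)
  refine ⟨l, k, ?_, ?_, ?_⟩
  · intro j u
    exact h12 _ _ _ (h10 _ _ (h12 _ _ _ (h13 x' hx'ne) (hxs' j))) (hxs' u)
  · intro j u
    exact h12 _ _ _ (h10 _ _ (h12 _ _ _ (h13 y' hy'ne) (hyt' j))) (hyt' u)
  · intro j u
    exact h10 _ _ (h12 _ _ _ (h10 _ _ (h12 _ _ _ hCx'y' (hyt' u))) (hxs' j))
end

section
/- Every distributive contact join-semilattice satisfies the axiom schema A_{n,i} for all n, i ≥ 1: if t ≰ u, t ≤ x₁, …, xₙ, and each x_j is presented as a finite join x_j = x_j¹ + … + x_jⁱ, then there exist indices j₁, …, jₙ ∈ {1, …, i} such that x_k^{j_k} ≰ u for every k ∈ {1, …, n} and every two elements among x₁^{j₁}, …, xₙ^{jₙ} are in contact. -/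
/-- Finite distributivity: a decomposition of `s` along a finite join. -/
lemma aux_decomp {B : Type*} [SemilatticeSup B] [OrderBot B]
    (had : ∀ x a b : B, x ≤ a ⊔ b → ∃ a' b' : B, a' ≤ a ∧ b' ≤ b ∧ x = a' ⊔ b') :
    ∀ (m : ℕ) (f : Fin m → B) (s : B), s ≤ Finset.univ.sup f →
      ∃ g : Fin m → B, (∀ j, g j ≤ f j) ∧ s = Finset.univ.sup g := by
  intro m
  induction m with
  | zero =>
    intro f s hs
    refine ⟨f, fun j => le_rfl, ?_⟩
    simpa using le_antisymm (by simpa using hs) bot_le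
  | succ m ih =>
    intro f s hs
    have hsup : Finset.univ.sup f = f 0 ⊔ Finset.univ.sup (f ∘ Fin.succ) := by
      rw [Fin.univ_succ, Finset.sup_cons, Finset.sup_map]
      rfl
    rw [hsup] at hs
    obtain ⟨a, b, ha, hb, hab⟩ := had s (f 0) (Finset.univ.sup (f ∘ Fin.succ)) hs
    obtain ⟨g', hg', hb'⟩ := ih (f ∘ Fin.succ) b hb
    refine ⟨Fin.cases a g', ?_, ?_⟩
    · intro j
      induction j using Fin.cases with
      | zero => simpa using ha
      | succ j => simpa using hg' j
    · have hsup2 : Finset.univ.sup (Fin.cases a g' : Fin (m+1) → B)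
          = a ⊔ Finset.univ.sup g' := by
        rw [Fin.univ_succ, Finset.sup_cons, Finset.sup_map]
        congr 1
      rw [hsup2, hab, hb']

/-- From `s ≤ ⊔ f` and `s ≰ u`, extract one component below some `f j`. -/
lemma aux_pick {B : Type*} [SemilatticeSup B] [OrderBot B]
    (had : ∀ x a b : B, x ≤ a ⊔ b → ∃ a' b' : B, a' ≤ a ∧ b' ≤ b ∧ x = a' ⊔ b')
    (m : ℕ) (f : Fin m → B) (s u : B) (hs : s ≤ Finset.univ.sup f) (hsu : ¬ s ≤ u) :
    ∃ (j : Fin m) (s' : B), s' ≤ f j ∧ s' ≤ s ∧ ¬ s' ≤ u := by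
  obtain ⟨g, hg, hsg⟩ := aux_decomp had m f s hs
  by_cases h : ∀ j, g j ≤ u
  · exact absurd (hsg ▸ Finset.sup_le fun j _ => h j) hsu
  · push_neg at h
    obtain ⟨j, hj⟩ := h
    exact ⟨j, g j, hg j, hsg ▸ Finset.le_sup (Finset.mem_univ j), hj⟩

lemma aux_main {B : Type*} [SemilatticeSup B] [OrderBot B]
    (had : ∀ x a b : B, x ≤ a ⊔ b → ∃ a' b' : B, a' ≤ a ∧ b' ≤ b ∧ x = a' ⊔ b')
    (i : ℕ) (u : B) :
    ∀ (n : ℕ) (x' : Fin n → Fin i → B) (t : B), ¬ t ≤ u →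
      (∀ k, t ≤ Finset.univ.sup (x' k)) →
      ∃ (s : B) (j : Fin n → Fin i), s ≤ t ∧ ¬ s ≤ u ∧ ∀ k, s ≤ x' k (j k) := by
  intro n
  induction n with
  | zero =>
    intro x' t htu _
    exact ⟨t, fun k => k.elim0, le_rfl, htu, fun k => k.elim0⟩
  | succ n ih =>
    intro x' t htu htx
    obtain ⟨j0, s0, hs0f, hs0t, hs0u⟩ := aux_pick had i (x' 0) t u (htx 0) htu
    obtain ⟨s, j, hst, hsu, hsk⟩ := ih (fun k => x' k.succ) s0 hs0u
      (fun k => le_trans hs0t (htx k.succ))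
    refine ⟨s, Fin.cases j0 j, le_trans hst hs0t, hsu, ?_⟩
    intro k
    induction k using Fin.cases with
    | zero => simpa using le_trans hst hs0f
    | succ k => simpa using hsk k

/-- Every distributive contact join-semilattice satisfies the axiom
schema `A_{n,i}` for all `n, i ≥ 1`. -/
theorem stmt_3 {B : Type*} [SemilatticeSup B] [OrderBot B] [OrderTop B]
    (C : B → B → Prop)
    (h9 : ∀ a b : B, C a b → a ≠ ⊥)
    (h10 : ∀ a b : B, C a b → C b a)
    (h11 : ∀ a b c : B, C a (b ⊔ c) → C a b ∨ C a c)
    (h12 : ∀ a b b' : B, C a b → b ≤ b' → C a b')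
    (h13 : ∀ a : B, a ≠ ⊥ → C a a)
    (had : ∀ x a b : B, x ≤ a ⊔ b → ∃ a' b' : B, a' ≤ a ∧ b' ≤ b ∧ x = a' ⊔ b')
    (n i : ℕ) (hn : 1 ≤ n) (hi : 1 ≤ i)
    (t u : B) (x : Fin n → B) (x' : Fin n → Fin i → B)
    (htu : ¬ t ≤ u) (htx : ∀ k, t ≤ x k)
    (hx : ∀ k, x k = Finset.univ.sup (x' k)) :
    ∃ j : Fin n → Fin i,
      (∀ k, ¬ x' k (j k) ≤ u) ∧
      (∀ k l, C (x' k (j k)) (x' l (j l))) := by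
  obtain ⟨s, j, hst, hsu, hsk⟩ := aux_main had i u n x' t htu (fun k => (hx k) ▸ htx k)
  have hsne : s ≠ ⊥ := fun h => hsu (h ▸ bot_le)
  have hCss := h13 s hsne
  refine ⟨j, fun k hk => hsu (le_trans (hsk k) hk), fun k l => ?_⟩
  have h1 : C s (x' l (j l)) := h12 s s _ hCss (hsk l)
  exact h10 _ _ (h12 _ _ _ (h10 _ _ h1) (hsk k))
end

section
/- Every distributive contact join-semilattice is a contact join-semilattice, i.e. every DCJS satisfies, for all m, n, i ≥ 1, both axiom schemas A¹_{m,i} and A_{n,i}. -/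
section Aux
variable {B : Type*} [SemilatticeSup B] [OrderBot B]

/-- Distributivity extended to finite sups: any element below a finite sup
decomposes as the sup of elements below the respective parts. -/
lemma aux_decomp_s4
    (had : ∀ x a b : B, x ≤ a ⊔ b → ∃ a' b' : B, a' ≤ a ∧ b' ≤ b ∧ x = a' ⊔ b')
    {α : Type*} [DecidableEq α] (s : Finset α) (p : α → B) (x : B)
    (hx : x ≤ s.sup p) :
    ∃ q : α → B, (∀ a, q a ≤ p a) ∧ x = s.sup q := by
  induction s using Finset.induction_on generalizing x with
  | empty =>
    simp only [Finset.sup_empty, le_bot_iff] at hx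
    exact ⟨fun _ => ⊥, fun _ => bot_le, by simp [hx]⟩
  | @insert a s ha ih =>
    rw [Finset.sup_insert] at hx
    obtain ⟨a', b', ha', hb', hx'⟩ := had _ _ _ hx
    obtain ⟨q, hq, hb''⟩ := ih b' hb'
    refine ⟨Function.update q a a', ?_, ?_⟩
    · intro c
      by_cases h : c = a
      · subst h; simpa using ha'
      · simpa [Function.update_of_ne h] using hq c
    · have hs : s.sup (Function.update q a a') = s.sup q :=
        Finset.sup_congr rfl fun c hc =>
          Function.update_of_ne (by rintro rfl; exact ha hc) _ _
      rw [Finset.sup_insert, Function.update_self, hs, ← hb'', hx']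

lemma aux_contact_sup (C : B → B → Prop)
    (h9 : ∀ a b : B, C a b → a ≠ ⊥)
    (h10 : ∀ a b : B, C a b → C b a)
    (h11 : ∀ a b c : B, C a (b ⊔ c) → C a b ∨ C a c)
    {α : Type*} (s : Finset α) (q : α → B) (x : B) (h : C x (s.sup q)) :
    ∃ a ∈ s, C x (q a) := by
  classical
  induction s using Finset.induction_on with
  | empty => exact absurd rfl (h9 _ _ (h10 _ _ (by simpa using h)))
  | @insert a s ha ih =>
    rw [Finset.sup_insert] at h
    rcases h11 _ _ _ h with h | h
    · exact ⟨a, Finset.mem_insert_self _ _, h⟩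
    · obtain ⟨b, hb, hC⟩ := ih h
      exact ⟨b, Finset.mem_insert_of_mem hb, hC⟩

lemma aux_L1 (C : B → B → Prop)
    (h9 : ∀ a b : B, C a b → a ≠ ⊥)
    (h10 : ∀ a b : B, C a b → C b a)
    (h11 : ∀ a b c : B, C a (b ⊔ c) → C a b ∨ C a c)
    (had : ∀ x a b : B, x ≤ a ⊔ b → ∃ a' b' : B, a' ≤ a ∧ b' ≤ b ∧ x = a' ⊔ b') :
    ∀ (m i : ℕ) (s' : Fin m → Fin i → B) (x y : B),
    C x y → (∀ j, x ≤ Finset.univ.sup (s' j)) →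
    ∃ (l : Fin m → Fin i) (z : B), z ≤ x ∧ C z y ∧ ∀ j, z ≤ s' j (l j) := by
  intro m
  induction m with
  | zero =>
    intro i s' x y hC _
    exact ⟨Fin.elim0, x, le_rfl, hC, fun j => j.elim0⟩
  | succ m ih =>
    intro i s' x y hC hle
    obtain ⟨l, z, hzx, hzy, hz⟩ :=
      ih i (fun j => s' j.succ) x y hC (fun j => hle j.succ)
    have hz0 : z ≤ Finset.univ.sup (s' 0) := hzx.trans (hle 0)
    obtain ⟨q, hq, hzq⟩ := aux_decomp_s4 had Finset.univ (s' 0) z hz0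
    have hyz : C y (Finset.univ.sup q) := by rw [← hzq]; exact h10 _ _ hzy
    obtain ⟨k, -, hk⟩ := aux_contact_sup C h9 h10 h11 _ _ _ hyz
    have hqz : q k ≤ z := le_of_le_of_eq (Finset.le_sup (Finset.mem_univ k)) hzq.symm
    refine ⟨Fin.cases k l, q k, hqz.trans hzx, h10 _ _ hk, ?_⟩
    intro j
    refine Fin.cases ?_ ?_ j
    · simpa using hq k
    · intro j'
      simpa using hqz.trans (hz j')

lemma aux_L2 (C : B → B → Prop)
    (had : ∀ x a b : B, x ≤ a ⊔ b → ∃ a' b' : B, a' ≤ a ∧ b' ≤ b ∧ x = a' ⊔ b') :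
    ∀ (n i : ℕ) (x' : Fin n → Fin i → B) (t u : B),
    ¬ t ≤ u → (∀ k, t ≤ Finset.univ.sup (x' k)) →
    ∃ (j : Fin n → Fin i) (z : B), z ≤ t ∧ ¬ z ≤ u ∧ ∀ k, z ≤ x' k (j k) := by
  intro n
  induction n with
  | zero =>
    intro i x' t u htu _
    exact ⟨Fin.elim0, t, le_rfl, htu, fun k => k.elim0⟩
  | succ n ih =>
    intro i x' t u htu hle
    obtain ⟨j, z, hzt, hzu, hz⟩ :=
      ih i (fun k => x' k.succ) t u htu (fun k => hle k.succ)
    have hz0 : z ≤ Finset.univ.sup (x' 0) := hzt.trans (hle 0)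
    obtain ⟨q, hq, hzq⟩ := aux_decomp_s4 had Finset.univ (x' 0) z hz0
    have : ∃ k : Fin i, ¬ q k ≤ u := by
      by_contra h
      push_neg at h
      exact hzu (hzq ▸ Finset.sup_le fun k _ => h k)
    obtain ⟨k, hk⟩ := this
    have hqz : q k ≤ z := le_of_le_of_eq (Finset.le_sup (Finset.mem_univ k)) hzq.symm
    refine ⟨Fin.cases k j, q k, hqz.trans hzt, hk, ?_⟩
    intro k'
    refine Fin.cases ?_ ?_ k'
    · simpa using hq k
    · intro k''
      simpa using hqz.trans (hz k'')

end Aux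

/-- Every distributive contact join-semilattice is a contact
join-semilattice, i.e. every DCJS satisfies, for all `m, n, i ≥ 1`, both axiom
schemas `A¹_{m,i}` and `A_{n,i}`. -/
theorem stmt_4 {B : Type*} [SemilatticeSup B] [OrderBot B] [OrderTop B]
    (C : B → B → Prop)
    (h9 : ∀ a b : B, C a b → a ≠ ⊥)
    (h10 : ∀ a b : B, C a b → C b a)
    (h11 : ∀ a b c : B, C a (b ⊔ c) → C a b ∨ C a c)
    (h12 : ∀ a b b' : B, C a b → b ≤ b' → C a b')
    (h13 : ∀ a : B, a ≠ ⊥ → C a a)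
    (had : ∀ x a b : B, x ≤ a ⊔ b → ∃ a' b' : B, a' ≤ a ∧ b' ≤ b ∧ x = a' ⊔ b') :
    (∀ m i : ℕ, 1 ≤ m → 1 ≤ i →
      ∀ (x y : B) (s t : Fin m → B) (s' t' : Fin m → Fin i → B),
      C x y → (∀ j, x ≤ s j) → (∀ j, y ≤ t j) →
      (∀ j, s j = Finset.univ.sup (s' j)) → (∀ j, t j = Finset.univ.sup (t' j)) →
      ∃ l k : Fin m → Fin i,
        (∀ j u, C (s' j (l j)) (s' u (l u))) ∧
        (∀ j u, C (t' j (k j)) (t' u (k u))) ∧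
        (∀ j u, C (s' j (l j)) (t' u (k u)))) ∧
    (∀ n i : ℕ, 1 ≤ n → 1 ≤ i →
      ∀ (t u : B) (x : Fin n → B) (x' : Fin n → Fin i → B),
      ¬ t ≤ u → (∀ k, t ≤ x k) → (∀ k, x k = Finset.univ.sup (x' k)) →
      ∃ j : Fin n → Fin i,
        (∀ k, ¬ x' k (j k) ≤ u) ∧
        (∀ k l, C (x' k (j k)) (x' l (j l)))) := by
  -- subsumption on both sides
  have lift : ∀ a b a' b' : B, C a b → a ≤ a' → b ≤ b' → C a' b' := by
    intro a b a' b' h ha hb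
    exact h10 _ _ (h12 _ _ _ (h10 _ _ (h12 _ _ _ h hb)) ha)
  constructor
  · intro m i _ _ x y s t s' t' hC hxs hyt hs ht
    obtain ⟨l, z, hzx, hzy, hz⟩ :=
      aux_L1 C h9 h10 h11 had m i s' x y hC (fun j => (hs j) ▸ hxs j)
    obtain ⟨k, w, hwy, hwz, hw⟩ :=
      aux_L1 C h9 h10 h11 had m i t' y z (h10 _ _ hzy) (fun j => (ht j) ▸ hyt j)
    have hzC : C z z := h13 z (h9 _ _ hzy)
    have hwC : C w w := h13 w (h9 _ _ hwz)
    exact ⟨l, k,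
      fun j u => lift _ _ _ _ hzC (hz j) (hz u),
      fun j u => lift _ _ _ _ hwC (hw j) (hw u),
      fun j u => lift _ _ _ _ (h10 _ _ hwz) (hz j) (hw u)⟩
  · intro n i _ _ t u x x' htu hx hx'
    obtain ⟨j, z, hzt, hzu, hz⟩ :=
      aux_L2 C had n i x' t u htu (fun k => (hx' k) ▸ hx k)
    have hzC : C z z := h13 z (fun h => hzu (h ▸ bot_le))
    exact ⟨j, fun k h => hzu ((hz k).trans h),
      fun k l => lift _ _ _ _ hzC (hz k) (hz l)⟩
end

section
/- Let W be a nonempty set and let B be a family of subsets of W containing ∅ and W and closed under binary union. Define on B: 0 = ∅, 1 = W, a + b = a ∪ b, a ≤ b iff a ⊆ b, and aCb iff a ∩ b ≠ ∅. Then the structure (B, ≤, 0, 1, +, C) is a contact join-semilattice: C satisfies (9) aCb → a ≠ ∅ and (10) aCb → bCa, and, for all m, n, i ≥ 1, the axiom schemas A¹_{m,i} and A_{n,i} hold. -/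
/-- For a nonempty set `W` and a family `B` of subsets of `W`
containing `∅` and `W` and closed under binary union, the structure
`(B, ⊆, ∅, W, ∪, C)` with `aCb` iff `a ∩ b ≠ ∅` is a contact join-semilattice:
axioms (9), (10) and the schemas `A¹_{m,i}` and `A_{n,i}` hold. -/
theorem stmt_6 {W : Type*} (hW : Nonempty W) (B : Set (Set W))
    (h0 : ∅ ∈ B) (h1 : Set.univ ∈ B) (hcup : ∀ a ∈ B, ∀ b ∈ B, a ∪ b ∈ B) :
    (∀ a ∈ B, ∀ b ∈ B, (a ∩ b).Nonempty → a ≠ ∅) ∧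
    (∀ a ∈ B, ∀ b ∈ B, (a ∩ b).Nonempty → (b ∩ a).Nonempty) ∧
    (∀ m i : ℕ, 1 ≤ m → 1 ≤ i → ∀ x ∈ B, ∀ y ∈ B,
      ∀ s t : Fin m → Set W, ∀ s' t' : Fin m → Fin i → Set W,
      (∀ j, s j ∈ B) → (∀ j, t j ∈ B) →
      (∀ j k, s' j k ∈ B) → (∀ j k, t' j k ∈ B) →
      (x ∩ y).Nonempty → (∀ j, x ⊆ s j) → (∀ j, y ⊆ t j) →
      (∀ j, s j = ⋃ k, s' j k) → (∀ j, t j = ⋃ k, t' j k) →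
      ∃ l k : Fin m → Fin i,
        (∀ j u, (s' j (l j) ∩ s' u (l u)).Nonempty) ∧
        (∀ j u, (t' j (k j) ∩ t' u (k u)).Nonempty) ∧
        (∀ j u, (s' j (l j) ∩ t' u (k u)).Nonempty)) ∧
    (∀ n i : ℕ, 1 ≤ n → 1 ≤ i → ∀ t ∈ B, ∀ u ∈ B,
      ∀ x : Fin n → Set W, ∀ x' : Fin n → Fin i → Set W,
      (∀ k, x k ∈ B) → (∀ k j, x' k j ∈ B) →
      ¬ t ⊆ u → (∀ k, t ⊆ x k) → (∀ k, x k = ⋃ j, x' k j) →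
      ∃ j : Fin n → Fin i,
        (∀ k, ¬ x' k (j k) ⊆ u) ∧
        (∀ k l, (x' k (j k) ∩ x' l (j l)).Nonempty)) := by
  refine ⟨?_, ?_, ?_, ?_⟩
  · rintro a _ b _ ⟨p, hpa, _⟩ rfl; exact hpa
  · rintro a _ b _ ⟨p, hpa, hpb⟩; exact ⟨p, hpb, hpa⟩
  · rintro m i hm hi x _ y _ s t s' t' _ _ _ _ ⟨p, hpx, hpy⟩ hxs hyt hs ht
    have hl : ∀ j, ∃ k, p ∈ s' j k := by
      intro j
      have := hxs j hpx
      rw [hs j] at this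
      simpa using this
    have hk : ∀ j, ∃ k, p ∈ t' j k := by
      intro j
      have := hyt j hpy
      rw [ht j] at this
      simpa using this
    choose l hl using hl
    choose k hk using hk
    exact ⟨l, k, fun j u => ⟨p, hl j, hl u⟩, fun j u => ⟨p, hk j, hk u⟩,
      fun j u => ⟨p, hl j, hk u⟩⟩
  · rintro n i hn hi t _ u _ x x' _ _ htu htx hx
    obtain ⟨p, hpt, hpu⟩ := Set.not_subset.mp htu
    have hj : ∀ k, ∃ j, p ∈ x' k j := by
      intro k
      have := htx k hpt
      rw [hx k] at this
      simpa using this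
    choose j hj using hj
    exact ⟨j, fun k hsub => hpu (hsub (hj k)), fun k l => ⟨p, hj k, hj l⟩⟩
end

section
/- Let B be a contact join-semilattice and suppose tCt₁. Then there exists a clan Γ of B such that t ∈ Γ and t₁ ∈ Γ. -/
/-- A clan in a contact join-semilattice. -/
def IsClan {B : Type*} [SemilatticeSup B] [OrderBot B] [OrderTop B]
    (C : B → B → Prop) (Γ : Set B) : Prop :=
  (⊤ : B) ∈ Γ ∧ (⊥ : B) ∉ Γ ∧
  (∀ x y : B, x ∈ Γ → x ≤ y → y ∈ Γ) ∧
  (∀ x y : B, x ∈ Γ → y ∈ Γ → C x y) ∧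
  (∀ x y : B, x ⊔ y ∈ Γ → x ∈ Γ ∨ y ∈ Γ)

private lemma key_lemma {B : Type*} [SemilatticeSup B] [OrderBot B] [OrderTop B]
    (C : B → B → Prop)
    (h10 : ∀ a b : B, C a b → C b a)
    (hA1 : ∀ m i : ℕ, 1 ≤ m → 1 ≤ i →
      ∀ (x y : B) (s t : Fin m → B) (s' t' : Fin m → Fin i → B),
      C x y → (∀ j, x ≤ s j) → (∀ j, y ≤ t j) →
      (∀ j, s j = Finset.univ.sup (s' j)) → (∀ j, t j = Finset.univ.sup (t' j)) →
      ∃ l k : Fin m → Fin i,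
        (∀ j u, C (s' j (l j)) (s' u (l u))) ∧
        (∀ j u, C (t' j (k j)) (t' u (k u))) ∧
        (∀ j u, C (s' j (l j)) (t' u (k u))))
    (t t₁ : B) (h : C t t₁)
    (ht : ¬ t ≤ (⊥ : B)) (ht₁ : ¬ t₁ ≤ (⊥ : B))
    (M : ℕ) (a b : Fin M → B) (hnc : ∀ k, ¬ C (a k) (b k)) :
    ∃ u : B, ¬ t ≤ u ∧ ¬ t₁ ≤ u ∧ ∀ k, a k ≤ u ∨ b k ≤ u := by
  classical
  by_contra hcon
  push_neg at hcon
  -- hcon : ∀ u, ¬ t ≤ u → ¬ t₁ ≤ u → ∃ k, ¬ a k ≤ u ∧ ¬ b k ≤ u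
  set pt : (Fin M → Bool) → Fin M → B := fun c j => if c j then b j else a j with hptdef
  set Pc : (Fin M → Bool) → B := fun c => Finset.univ.sup (pt c) with hPcdef
  have hP : ∀ c : Fin M → Bool, t ≤ Pc c ∨ t₁ ≤ Pc c := by
    intro c
    by_contra hcc
    push_neg at hcc
    obtain ⟨k, hk1, hk2⟩ := hcon (Pc c) hcc.1 hcc.2
    have hle : pt c k ≤ Pc c := Finset.le_sup (Finset.mem_univ k)
    cases hck : c k
    · rw [hptdef] at hle; simp only [hck] at hle
      exact hk1 (by simpa using hle)
    · rw [hptdef] at hle; simp only [hck] at hle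
      exact hk2 (by simpa using hle)
  rcases Nat.eq_zero_or_pos M with hM | hM
  · subst hM
    have h0 := hP (fun _ => true)
    have hPc0 : Pc (fun _ => true) = ⊥ := by
      rw [hPcdef]; simp
    rw [hPc0] at h0
    rcases h0 with h0 | h0
    · exact ht h0
    · exact ht₁ h0
  · haveI : Nonempty (Fin M) := ⟨⟨0, hM⟩⟩
    set e := Fintype.equivFin (Fin M → Bool) with he
    set m := Fintype.card (Fin M → Bool) with hmdef
    have hm1 : 1 ≤ m := Fintype.card_pos
    set s : Fin m → B := fun J => if t ≤ Pc (e.symm J) then Pc (e.symm J) else t with hsdef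
    set s' : Fin m → Fin M → B :=
      fun J => if t ≤ Pc (e.symm J) then pt (e.symm J) else fun _ => t with hs'def
    set r : Fin m → B := fun J => if t₁ ≤ Pc (e.symm J) then Pc (e.symm J) else t₁ with hrdef
    set r' : Fin m → Fin M → B :=
      fun J => if t₁ ≤ Pc (e.symm J) then pt (e.symm J) else fun _ => t₁ with hr'def
    have hs : ∀ J, t ≤ s J := by
      intro J; rw [hsdef]; dsimp only; split_ifs with h'
      · exact h'
      · exact le_refl t
    have hr : ∀ J, t₁ ≤ r J := by
      intro J; rw [hrdef]; dsimp only; split_ifs with h'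
      · exact h'
      · exact le_refl t₁
    have hsd : ∀ J, s J = Finset.univ.sup (s' J) := by
      intro J; rw [hsdef, hs'def]; dsimp only; split_ifs with h'
      · rfl
      · exact (Finset.sup_const Finset.univ_nonempty t).symm
    have hrd : ∀ J, r J = Finset.univ.sup (r' J) := by
      intro J; rw [hrdef, hr'def]; dsimp only; split_ifs with h'
      · rfl
      · exact (Finset.sup_const Finset.univ_nonempty t₁).symm
    obtain ⟨l, kk, hss, hrr, hsr⟩ := hA1 m M hm1 hM t t₁ s r s' r' h hs hr hsd hrd
    set Good : B → Prop := fun v => (∃ J, s' J (l J) = v) ∨ (∃ J, r' J (kk J) = v) with hGdef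
    have hGC : ∀ v w, Good v → Good w → C v w := by
      rintro v w (⟨J, rfl⟩ | ⟨J, rfl⟩) (⟨J', rfl⟩ | ⟨J', rfl⟩)
      · exact hss J J'
      · exact hsr J J'
      · exact h10 _ _ (hsr J' J)
      · exact hrr J J'
    have hsel : ∀ c : Fin M → Bool, ∃ k0 : Fin M, Good (if c k0 then b k0 else a k0) := by
      intro c
      rcases hP c with hc | hc
      · refine ⟨l (e c), Or.inl ⟨e c, ?_⟩⟩
        rw [hs'def]; dsimp only
        rw [e.symm_apply_apply, if_pos hc]
      · refine ⟨kk (e c), Or.inr ⟨e c, ?_⟩⟩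
        rw [hr'def]; dsimp only
        rw [e.symm_apply_apply, if_pos hc]
    choose σ hσ using hsel
    set A : Fin M → Prop := fun k => ∃ c, σ c = k ∧ c k = false with hAdef
    have hGa : ∀ k, A k → Good (a k) := by
      rintro k ⟨c, hc1, hc2⟩
      have := hσ c
      rw [hc1, hc2] at this
      simpa using this
    have hGb : ∀ k, (∃ c, σ c = k ∧ c k = true) → Good (b k) := by
      rintro k ⟨c, hc1, hc2⟩
      have := hσ c
      rw [hc1, hc2] at this
      simpa using this
    set cstar : Fin M → Bool := fun k => if A k then true else false with hcsdef
    by_cases hAk : A (σ cstar)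
    · have hBk : ∃ c, σ c = σ cstar ∧ c (σ cstar) = true := by
        refine ⟨cstar, rfl, ?_⟩
        rw [hcsdef]; dsimp only; rw [if_pos hAk]
      exact hnc (σ cstar) (hGC _ _ (hGa _ hAk) (hGb _ hBk))
    · refine hAk ⟨cstar, rfl, ?_⟩
      rw [hcsdef]; dsimp only; rw [if_neg hAk]

/-- In a contact join-semilattice, if `tCt₁` then there is a clan
`Γ` with `t ∈ Γ` and `t₁ ∈ Γ`. -/
theorem stmt_9 {B : Type*} [SemilatticeSup B] [OrderBot B] [OrderTop B]
    (C : B → B → Prop)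
    (h9 : ∀ a b : B, C a b → a ≠ ⊥)
    (h10 : ∀ a b : B, C a b → C b a)
    (hA1 : ∀ m i : ℕ, 1 ≤ m → 1 ≤ i →
      ∀ (x y : B) (s t : Fin m → B) (s' t' : Fin m → Fin i → B),
      C x y → (∀ j, x ≤ s j) → (∀ j, y ≤ t j) →
      (∀ j, s j = Finset.univ.sup (s' j)) → (∀ j, t j = Finset.univ.sup (t' j)) →
      ∃ l k : Fin m → Fin i,
        (∀ j u, C (s' j (l j)) (s' u (l u))) ∧
        (∀ j u, C (t' j (k j)) (t' u (k u))) ∧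
        (∀ j u, C (s' j (l j)) (t' u (k u))))
    (hA : ∀ n i : ℕ, 1 ≤ n → 1 ≤ i →
      ∀ (t u : B) (x : Fin n → B) (x' : Fin n → Fin i → B),
      ¬ t ≤ u → (∀ k, t ≤ x k) → (∀ k, x k = Finset.univ.sup (x' k)) →
      ∃ j : Fin n → Fin i,
        (∀ k, ¬ x' k (j k) ≤ u) ∧
        (∀ k l, C (x' k (j k)) (x' l (j l))))
    (t t₁ : B) (h : C t t₁) :
    ∃ Γ : Set B, IsClan C Γ ∧ t ∈ Γ ∧ t₁ ∈ Γ := by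
  classical
  have ht : ¬ t ≤ (⊥ : B) := fun hle => h9 t t₁ h (le_bot_iff.mp hle)
  have ht₁ : ¬ t₁ ≤ (⊥ : B) := fun hle => h9 t₁ t (h10 t t₁ h) (le_bot_iff.mp hle)
  have key := key_lemma C h10 hA1 t t₁ h ht ht₁
  -- Finset version of the key lemma
  have key' : ∀ F : Finset (B × B), ∃ u : B, ¬ t ≤ u ∧ ¬ t₁ ≤ u ∧
      ∀ p ∈ F, ¬ C p.1 p.2 → (p.1 ≤ u ∨ p.2 ≤ u) := by
    intro F
    set G := F.filter (fun p => ¬ C p.1 p.2) with hG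
    obtain ⟨u, hu1, hu2, hu3⟩ := key G.card
      (fun k => ((G.equivFin.symm k : G) : B × B).1)
      (fun k => ((G.equivFin.symm k : G) : B × B).2)
      (by
        intro k
        have hk : ((G.equivFin.symm k : G) : B × B) ∈ G := (G.equivFin.symm k).2
        exact (Finset.mem_filter.mp hk).2)
    refine ⟨u, hu1, hu2, ?_⟩
    intro p hp hpc
    have hpG : p ∈ G := Finset.mem_filter.mpr ⟨hp, hpc⟩
    have h3 := hu3 (G.equivFin ⟨p, hpG⟩)
    simpa using h3
  choose u hu1 hu2 hu3 using key'
  haveI : Nonempty (Finset (B × B)) := ⟨∅⟩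
  haveI : Filter.NeBot (Filter.atTop : Filter (Finset (B × B))) := Filter.atTop_neBot
  set U : Ultrafilter (Finset (B × B)) := Ultrafilter.of Filter.atTop with hU
  have hUle : ∀ {S : Set (Finset (B × B))}, S ∈ (Filter.atTop : Filter (Finset (B × B))) → S ∈ U :=
    fun hS => Ultrafilter.of_le Filter.atTop hS
  set Γ : Set B := {z : B | {F : Finset (B × B) | ¬ z ≤ u F} ∈ U} with hΓ
  have hmemt : t ∈ Γ := by
    rw [hΓ]
    exact Filter.univ_mem' (fun F => hu1 F)
  have hmemt₁ : t₁ ∈ Γ := by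
    rw [hΓ]
    exact Filter.univ_mem' (fun F => hu2 F)
  refine ⟨Γ, ⟨?_, ?_, ?_, ?_, ?_⟩, hmemt, hmemt₁⟩
  · -- ⊤ ∈ Γ
    rw [hΓ]
    refine Filter.univ_mem' (fun F => ?_)
    intro htop
    exact hu1 F (le_trans le_top htop)
  · -- ⊥ ∉ Γ
    rw [hΓ]
    simp only [Set.mem_setOf_eq]
    intro hmem
    have : {F : Finset (B × B) | ¬ (⊥ : B) ≤ u F} = ∅ := by
      ext F; simp [bot_le]
    rw [this] at hmem
    exact (Filter.empty_notMem (U : Filter (Finset (B × B)))) hmem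
  · -- upward closed
    intro x y hx hxy
    rw [hΓ] at hx ⊢
    refine Filter.mem_of_superset hx (fun F hF => ?_)
    intro hyu
    exact hF (le_trans hxy hyu)
  · -- pairwise contact
    intro x y hx hy
    by_contra hnc
    rw [hΓ] at hx hy
    have h3 : {F : Finset (B × B) | ({(x, y)} : Finset (B × B)) ≤ F} ∈ U := by
      have := Filter.Ici_mem_atTop ({(x, y)} : Finset (B × B))
      exact hUle this
    have hmem := Filter.inter_mem (Filter.inter_mem hx hy) h3
    obtain ⟨F, ⟨⟨hF1, hF2⟩, hF3⟩⟩ := Filter.nonempty_of_mem hmem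
    have hpF : (x, y) ∈ F := Finset.singleton_subset_iff.mp hF3
    rcases hu3 F (x, y) hpF hnc with hle | hle
    · exact hF1 hle
    · exact hF2 hle
  · -- prime
    intro x y hxy
    rw [hΓ] at hxy
    have hsub : {F : Finset (B × B) | ¬ x ⊔ y ≤ u F} ⊆
        {F : Finset (B × B) | ¬ x ≤ u F} ∪ {F : Finset (B × B) | ¬ y ≤ u F} := by
      intro F hF
      by_contra hc
      simp only [Set.mem_union, Set.mem_setOf_eq, not_or, not_not] at hc
      exact hF (sup_le hc.1 hc.2)
    have hmem : {F : Finset (B × B) | ¬ x ≤ u F} ∪ {F : Finset (B × B) | ¬ y ≤ u F} ∈ U :=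
      Filter.mem_of_superset hxy hsub
    rcases (Ultrafilter.union_mem_iff).mp hmem with hm | hm
    · left; rw [hΓ]; exact hm
    · right; rw [hΓ]; exact hm
end

section
/- Let B be a contact join-semilattice and suppose t ≰ u. Then there exists a clan Γ of B such that t ∈ Γ and u ∉ Γ. -/
lemma sup_fin_two {B : Type*} [SemilatticeSup B] [OrderBot B] (f : Fin 2 → B) :
    Finset.univ.sup f = f 0 ⊔ f 1 := by
  apply le_antisymm
  · apply Finset.sup_le
    intro k _
    fin_cases k
    · exact le_sup_left
    · exact le_sup_right
  · exact sup_le (Finset.le_sup (Finset.mem_univ _)) (Finset.le_sup (Finset.mem_univ _))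

/-- In a contact join-semilattice, if `t ≰ u` then there is a clan
`Γ` with `t ∈ Γ` and `u ∉ Γ`. -/
theorem stmt_10 {B : Type*} [SemilatticeSup B] [OrderBot B] [OrderTop B]
    (C : B → B → Prop)
    (h9 : ∀ a b : B, C a b → a ≠ ⊥)
    (h10 : ∀ a b : B, C a b → C b a)
    (hA1 : ∀ m i : ℕ, 1 ≤ m → 1 ≤ i →
      ∀ (x y : B) (s t : Fin m → B) (s' t' : Fin m → Fin i → B),
      C x y → (∀ j, x ≤ s j) → (∀ j, y ≤ t j) →
      (∀ j, s j = Finset.univ.sup (s' j)) → (∀ j, t j = Finset.univ.sup (t' j)) →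
      ∃ l k : Fin m → Fin i,
        (∀ j u, C (s' j (l j)) (s' u (l u))) ∧
        (∀ j u, C (t' j (k j)) (t' u (k u))) ∧
        (∀ j u, C (s' j (l j)) (t' u (k u))))
    (hA : ∀ n i : ℕ, 1 ≤ n → 1 ≤ i →
      ∀ (t u : B) (x : Fin n → B) (x' : Fin n → Fin i → B),
      ¬ t ≤ u → (∀ k, t ≤ x k) → (∀ k, x k = Finset.univ.sup (x' k)) →
      ∃ j : Fin n → Fin i,
        (∀ k, ¬ x' k (j k) ≤ u) ∧
        (∀ k l, C (x' k (j k)) (x' l (j l))))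
    (t u : B) (h : ¬ t ≤ u) :
    ∃ Γ : Set B, IsClan C Γ ∧ t ∈ Γ ∧ u ∉ Γ := by
  classical
  -- S : the collection of ideals containing u and not t
  set S : Set (Set B) := {Δ | u ∈ Δ ∧ t ∉ Δ ∧ (∀ z d : B, z ≤ d → d ∈ Δ → z ∈ Δ) ∧
    (∀ a b : B, a ∈ Δ → b ∈ Δ → a ⊔ b ∈ Δ)} with hSdef
  have hS0 : {z : B | z ≤ u} ∈ S :=
    ⟨le_refl u, h, fun z d hz hd => hz.trans hd, fun a b ha hb => sup_le ha hb⟩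
  obtain ⟨Δ, -, hΔS, hmax⟩ := zorn_subset_nonempty S (fun c hcS hchain hcne => by
    obtain ⟨Δ₀, hΔ₀⟩ := hcne
    refine ⟨⋃₀ c, ⟨⟨Δ₀, hΔ₀, (hcS hΔ₀).1⟩, ?_, ?_, ?_⟩, fun s hs => Set.subset_sUnion_of_mem hs⟩
    · rintro ⟨Δ₁, hΔ₁, ht⟩
      exact (hcS hΔ₁).2.1 ht
    · rintro z d hz ⟨Δ₁, hΔ₁, hd⟩
      exact ⟨Δ₁, hΔ₁, (hcS hΔ₁).2.2.1 z d hz hd⟩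
    · rintro a b ⟨Δ₁, hΔ₁, ha⟩ ⟨Δ₂, hΔ₂, hb⟩
      rcases hchain.total hΔ₁ hΔ₂ with hle | hle
      · exact ⟨Δ₂, hΔ₂, (hcS hΔ₂).2.2.2 a b (hle ha) hb⟩
      · exact ⟨Δ₁, hΔ₁, (hcS hΔ₁).2.2.2 a b ha (hle hb)⟩) _ hS0
  obtain ⟨huΔ, htΔ, hdown, hsupc⟩ := hΔS
  -- key : maximality
  have key : ∀ a : B, a ∉ Δ → ∃ d ∈ Δ, t ≤ d ⊔ a := by
    intro a ha
    by_contra hcon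
    push_neg at hcon
    have hΔ' : {z : B | ∃ d ∈ Δ, z ≤ d ⊔ a} ∈ S := by
      refine ⟨⟨u, huΔ, le_sup_left⟩, ?_, ?_, ?_⟩
      · rintro ⟨d, hd, hle⟩
        exact hcon d hd hle
      · rintro z d hz ⟨d', hd', hle⟩
        exact ⟨d', hd', hz.trans hle⟩
      · rintro a₁ a₂ ⟨d₁, hd₁, h₁⟩ ⟨d₂, hd₂, h₂⟩
        refine ⟨d₁ ⊔ d₂, hsupc _ _ hd₁ hd₂, sup_le (h₁.trans ?_) (h₂.trans ?_)⟩
        · exact sup_le_sup_right le_sup_left a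
        · exact sup_le_sup_right le_sup_right a
    have hsub : Δ ⊆ {z : B | ∃ d ∈ Δ, z ≤ d ⊔ a} := fun z hz => ⟨z, hz, le_sup_left⟩
    have : {z : B | ∃ d ∈ Δ, z ≤ d ⊔ a} ⊆ Δ := hmax hΔ' hsub
    exact ha (this ⟨u, huΔ, le_sup_right⟩)
  -- contact among elements outside Δ
  have contact : ∀ a b : B, a ∉ Δ → b ∉ Δ → C a b := by
    intro a b ha hb
    obtain ⟨d₁, hd₁, ht₁⟩ := key a ha
    obtain ⟨d₂, hd₂, ht₂⟩ := key b hb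
    have hu' : ¬ t ≤ d₁ ⊔ d₂ := fun hle => htΔ (hdown _ _ hle (hsupc _ _ hd₁ hd₂))
    obtain ⟨j, hju, hjc⟩ := hA 2 2 (by norm_num) (by norm_num) t (d₁ ⊔ d₂)
      ![d₁ ⊔ a, d₂ ⊔ b] ![![d₁, a], ![d₂, b]] hu'
      (by intro k; fin_cases k <;> simpa using (by assumption : _))
      (by intro k; fin_cases k <;> simp [sup_fin_two])
    have two : ∀ k : Fin 2, k = 0 ∨ k = 1 := by decide
    have hj0 : j 0 = 1 := by
      rcases two (j 0) with h0 | h0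
      · have := hju 0; rw [h0] at this; simp at this
      · exact h0
    have hj1 : j 1 = 1 := by
      rcases two (j 1) with h0 | h0
      · have := hju 1; rw [h0] at this; simp at this
      · exact h0
    have := hjc 0 1
    rw [hj0, hj1] at this
    simpa using this
  refine ⟨Δᶜ, ⟨?_, ?_, ?_, contact, ?_⟩, ?_, ?_⟩
  · exact fun hT => htΔ (hdown _ _ le_top hT)
  · exact fun hB => hB (hdown _ _ bot_le huΔ)
  · exact fun x y hx hxy hy => hx (hdown _ _ hxy hy)
  · intro x y hxy
    by_contra hc
    push_neg at hc
    simp only [Set.mem_compl_iff, not_not] at hc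
    exact hxy (hsupc _ _ hc.1 hc.2)
  · exact htΔ
  · exact fun hu => hu huΔ
end

section
/- (Topological representation theorem of CJS) Let B be a contact join-semilattice. Then there exist a compact, semiregular, T₀ topological space X and a map h from B to the regular closed subsets of X such that h is injective, h(0) = ∅, h(1) = X, h(a + b) = h(a) ∪ h(b) for all a, b, a ≤ b iff h(a) ⊆ h(b), and aCb iff h(a) ∩ h(b) ≠ ∅. -/
/-
The points of `X` are the clans of `B`: sets `Γ` containing `⊤` that are upward closed, prime
(`x ⊔ y ∈ Γ → x ∈ Γ ∨ y ∈ Γ`) and pairwise in contact, and `h a` is the set of clans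
containing `a`. With the topology generated by the sets `h a` and their complements, every
`h a` is clopen, hence regular closed, and the clopen sets form a base of regular open sets;
an ultrafilter of clans converges to the clan of those `a` with `h a` in it.

Everything else rests on the existence of enough clans: one containing `a` but not `u` when
`a ≰ u`, and one containing `a` and `b` when `a C b`. For a finite `E ∋ a`, the axiom schemas
provide a set `S` of pairwise contacting elements that meets every decomposition, inside `E`,
of every element above `a` (resp. above `a` or `b`); an inclusion-minimal such `S` is
automatically upward closed and prime relative to `E`. These finite approximations are glued
into a clan along an ultrafilter on the finite subsets of `B` refining `atTop`.
-/

universe u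

open Finset TopologicalSpace

theorem Finset.exists_fin_image {α : Type*} [DecidableEq α] {P : Finset α} (hP : P.Nonempty)
    {n : ℕ} (hn : P.card ≤ n) : ∃ f : Fin n → α, univ.image f = P := by
  have : Nonempty P := hP.to_subtype
  obtain ⟨e⟩ := Function.Embedding.nonempty_of_card_le
    (by simpa using hn : Fintype.card P ≤ Fintype.card (Fin n))
  refine ⟨Subtype.val ∘ Function.invFun e, ?_⟩
  rw [← image_image, image_univ_of_surjective (Function.invFun_surjective e.injective),
    univ_eq_attach, attach_image_val]

theorem Finset.exists_fin_enum {α : Type*} [DecidableEq α] {D : Finset (Finset α)}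
    (hne : D.Nonempty) (hD : ∀ P ∈ D, P.Nonempty) {m n : ℕ} (hm : D.card ≤ m)
    (hn : ∀ P ∈ D, P.card ≤ n) :
    ∃ f : Fin m → Fin n → α,
      (∀ P ∈ D, ∃ j, univ.image (f j) = P) ∧ ∀ j, univ.image (f j) ∈ D := by
  obtain ⟨g, hg⟩ := exists_fin_image hne hm
  have hgD : ∀ j, g j ∈ D := fun j => hg ▸ mem_image_of_mem g (mem_univ j)
  choose f hf using fun j => exists_fin_image (hD _ (hgD j)) (hn _ (hgD j))
  refine ⟨f, fun P hP => ?_, fun j => (hf j).symm ▸ hgD j⟩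
  obtain ⟨j, -, rfl⟩ := mem_image.mp (hg ▸ hP)
  exact ⟨j, hf j⟩

theorem TopologicalSpace.isTopologicalBasis_isClopen_of_generateFrom {X : Type*}
    [t : TopologicalSpace X] {s : Set (Set X)} (hts : t = generateFrom s)
    (hs : ∀ v ∈ s, IsClopen v) : IsTopologicalBasis {v : Set X | IsClopen v} := by
  refine (isTopologicalBasis_of_subbasis hts).of_isOpen_of_subset (fun v hv => hv.isOpen) ?_
  rintro _ ⟨f, ⟨hf, hfs⟩, rfl⟩
  show IsClopen (⋂₀ f)
  rw [Set.sInter_eq_biInter]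
  exact hf.isClopen_biInter fun v hv => hs v (hfs hv)

theorem TopologicalSpace.IsTopologicalBasis.regularOpen_of_isClopen {X : Type*}
    [TopologicalSpace X] (h : IsTopologicalBasis {v : Set X | IsClopen v}) :
    IsTopologicalBasis {v : Set X | v = interior (closure v)} :=
  h.of_isOpen_of_subset (fun v hv => hv ▸ isOpen_interior)
    fun v hv => show v = _ by rw [hv.isClosed.closure_eq, hv.isOpen.interior_eq]

namespace CJS

variable {B : Type u} [SemilatticeSup B] {C : B → B → Prop}

/-- Taking `x = y` shows that `S` is in particular upward closed in `E`. -/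
def IsPrimeUpperIn (E S : Finset B) : Prop :=
  ∀ s ∈ S, ∀ x ∈ E, ∀ y ∈ E, s ≤ x ⊔ y → x ∈ S ∨ y ∈ S

theorem IsPrimeUpperIn.mono {E F S : Finset B} (h : IsPrimeUpperIn E S) (hFE : F ⊆ E) :
    IsPrimeUpperIn F S :=
  fun s hs x hx y hy => h s hs x (hFE hx) y (hFE hy)

section Clan

variable [OrderTop B]

structure IsClan (C : B → B → Prop) (Γ : Set B) : Prop where
  top_mem : ⊤ ∈ Γ
  isUpperSet : IsUpperSet Γ
  mem_or_mem {x y : B} : x ⊔ y ∈ Γ → x ∈ Γ ∨ y ∈ Γ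
  contact : ∀ x ∈ Γ, ∀ y ∈ Γ, C x y

theorem exists_isClan_of_finite (S : Finset B → Finset B) (hne : ∀ F, (S F).Nonempty)
    (hprime : ∀ F, IsPrimeUpperIn F (S F)) (hC : ∀ F, ∀ s ∈ S F, ∀ s' ∈ S F, C s s') :
    ∃ Γ, IsClan C Γ ∧ (∀ x, (∀ F, x ∈ S F) → x ∈ Γ) ∧ ∀ x ∈ Γ, ∃ F, x ∈ S F := by
  let 𝒰 : Ultrafilter (Finset B) := .of Filter.atTop
  have hmem : ∀ x : B, ∀ᶠ F in (𝒰 : Filter (Finset B)), x ∈ F := fun x =>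
    Ultrafilter.of_le _ ((Filter.eventually_ge_atTop {x}).mono fun F h => h (mem_singleton_self x))
  refine ⟨{x | ∀ᶠ F in (𝒰 : Filter (Finset B)), x ∈ S F}, ⟨?_, ?_, ?_, ?_⟩,
    fun x hx => Filter.univ_mem' hx, fun x hx => hx.exists⟩
  · refine (hmem ⊤).mono fun F hF => ?_
    obtain ⟨s, hs⟩ := hne F
    exact (hprime F s hs ⊤ hF ⊤ hF (le_sup_of_le_left le_top)).elim id id
  · intro x y hxy hx
    refine (hx.and (hmem y)).mono fun F ⟨hxS, hyF⟩ => ?_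
    exact (hprime F x hxS y hyF y hyF (by simpa using hxy)).elim id id
  · intro x y hxy
    refine Ultrafilter.eventually_or.1 ((hxy.and ((hmem x).and (hmem y))).mono ?_)
    exact fun F ⟨h, hx, hy⟩ => hprime F _ h x hx y hy le_rfl
  · intro x hx y hy
    obtain ⟨F, hxF, hyF⟩ := (hx.and hy).exists
    exact hC F x hxF y hyF

end Clan

section Transversal

variable [OrderBot B]

def AxiomA1 (C : B → B → Prop) : Prop :=
  ∀ m i : ℕ, 1 ≤ m → 1 ≤ i →
    ∀ (x y : B) (s t : Fin m → B) (s' t' : Fin m → Fin i → B),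
    C x y → (∀ j, x ≤ s j) → (∀ j, y ≤ t j) →
    (∀ j, s j = univ.sup (s' j)) → (∀ j, t j = univ.sup (t' j)) →
    ∃ l k : Fin m → Fin i,
      (∀ j u, C (s' j (l j)) (s' u (l u))) ∧
      (∀ j u, C (t' j (k j)) (t' u (k u))) ∧
      (∀ j u, C (s' j (l j)) (t' u (k u)))

def AxiomA (C : B → B → Prop) : Prop :=
  ∀ n i : ℕ, 1 ≤ n → 1 ≤ i →
    ∀ (t u : B) (x : Fin n → B) (x' : Fin n → Fin i → B),
    ¬ t ≤ u → (∀ k, t ≤ x k) → (∀ k, x k = univ.sup (x' k)) →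
    ∃ j : Fin n → Fin i,
      (∀ k, ¬ x' k (j k) ≤ u) ∧
      (∀ k l, C (x' k (j k)) (x' l (j l)))

def IsTransversal (U : Set B) (E S : Finset B) : Prop :=
  ∀ P ⊆ E, P.Nonempty → P.sup id ∈ U → ∃ s ∈ P, s ∈ S

variable {U : Set B} {E S : Finset B}

theorem IsTransversal.mem (hS : IsTransversal U E S) {a : B} (ha : a ∈ E) (haU : a ∈ U) :
    a ∈ S := by
  obtain ⟨s, hs, hsS⟩ := hS {a} (singleton_subset_iff.mpr ha) (singleton_nonempty a) (by simpa)
  exact mem_singleton.mp hs ▸ hsS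

theorem IsTransversal.isPrimeUpperIn_of_minimal (hU : IsUpperSet U)
    (hS : Minimal (IsTransversal U E) S) : IsPrimeUpperIn E S := by
  classical
  intro s hs x hx y hy hsxy
  by_contra! hxy
  have hnot : ¬ IsTransversal U E (S.erase s) := fun h => hS.not_lt h (erase_ssubset hs)
  simp only [IsTransversal, not_forall, not_exists, not_and] at hnot
  obtain ⟨P, hPE, hPne, hPU, hP⟩ := hnot
  -- replacing `s` by `x` and `y` in `P` yields a decomposition of a larger element of `U`
  set P' := insert x (insert y (P.erase s))
  have hle : P.sup id ≤ P'.sup id := Finset.sup_le fun t ht => by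
    by_cases hts : t = s
    · subst hts
      exact hsxy.trans (sup_le (le_sup (f := id) (mem_insert_self x _))
        (le_sup (f := id) (mem_insert_of_mem (mem_insert_self y _))))
    · exact le_sup (f := id) (mem_insert_of_mem (mem_insert_of_mem (mem_erase.mpr ⟨hts, ht⟩)))
  have hP'E : P' ⊆ E := insert_subset hx (insert_subset hy ((erase_subset s P).trans hPE))
  obtain ⟨z, hz, hzS⟩ := hS.prop P' hP'E (insert_nonempty _ _) (hU hle hPU)
  rcases mem_insert.mp hz with rfl | hz
  · exact hxy.1 hzS
  rcases mem_insert.mp hz with rfl | hz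
  · exact hxy.2 hzS
  exact hP z (mem_of_mem_erase hz) (mem_erase.mpr ⟨ne_of_mem_erase hz, hzS⟩)

theorem IsTransversal.exists_isPrimeUpperIn_subset (hU : IsUpperSet U)
    (hS : IsTransversal U E S) :
    ∃ S' ⊆ S, IsTransversal U E S' ∧ IsPrimeUpperIn E S' := by
  obtain ⟨S', hS'S, hmin⟩ := exists_minimal_le_of_wellFoundedLT _ S hS
  exact ⟨S', hS'S, hmin.prop, isPrimeUpperIn_of_minimal hU hmin⟩

theorem exists_fin_enum_decompositions {t : B} (ht : t ∈ E) :
    ∃ f : Fin E.powerset.card → Fin E.card → B,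
      (∀ P ⊆ E, P.Nonempty → t ≤ P.sup id → ∃ j, ∀ k, f j k ∈ P) ∧
      ∀ j, t ≤ univ.sup (f j) := by
  classical
  set D := E.powerset.filter fun P => P.Nonempty ∧ t ≤ P.sup id
  have hD : ∀ {P}, P ∈ D ↔ P ⊆ E ∧ P.Nonempty ∧ t ≤ P.sup id := by simp [D]
  obtain ⟨f, hfD, hf⟩ := exists_fin_enum (D := D) ⟨{t}, hD.2 (by simpa using ht)⟩
    (fun P hP => (hD.1 hP).2.1) (card_le_card (filter_subset _ _))
    (fun P hP => card_le_card (hD.1 hP).1)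
  refine ⟨f, fun P hPE hPne htP => ?_, fun j => ?_⟩
  · obtain ⟨j, rfl⟩ := hfD P (hD.2 ⟨hPE, hPne, htP⟩)
    exact ⟨j, fun k => mem_image_of_mem _ (mem_univ k)⟩
  · simpa [sup_image] using (hD.1 (hf j)).2.2

theorem exists_transversal_of_axiomA (hA : AxiomA C) {t u : B} (ht : t ∈ E) (htu : ¬ t ≤ u) :
    ∃ S, IsTransversal (Set.Ici t) E S ∧ (∀ s ∈ S, ¬ s ≤ u) ∧ ∀ s ∈ S, ∀ s' ∈ S, C s s' := by
  classical
  obtain ⟨f, hfP, hft⟩ := exists_fin_enum_decompositions ht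
  obtain ⟨c, hcu, hcC⟩ := hA _ _ (card_pos.2 (powerset_nonempty E)) (card_pos.2 ⟨t, ht⟩)
    t u _ f htu hft (fun _ => rfl)
  refine ⟨univ.image fun j => f j (c j), fun P hPE hPne htP => ?_, by simpa using hcu,
    by simpa using hcC⟩
  obtain ⟨j, hj⟩ := hfP P hPE hPne htP
  exact ⟨f j (c j), hj _, mem_image_of_mem _ (mem_univ _)⟩

theorem exists_transversal_of_axiomA1 (hsymm : ∀ a b, C a b → C b a) (hA1 : AxiomA1 C)
    {a b : B} (ha : a ∈ E) (hb : b ∈ E) (hab : C a b) :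
    ∃ S, IsTransversal (Set.Ici a ∪ Set.Ici b) E S ∧ ∀ s ∈ S, ∀ s' ∈ S, C s s' := by
  classical
  obtain ⟨f, hfP, hfa⟩ := exists_fin_enum_decompositions ha
  obtain ⟨g, hgP, hgb⟩ := exists_fin_enum_decompositions hb
  obtain ⟨l, k, hl, hk, hlk⟩ := hA1 _ _ (card_pos.2 (powerset_nonempty E)) (card_pos.2 ⟨a, ha⟩)
    a b _ _ f g hab hfa hgb (fun _ => rfl) (fun _ => rfl)
  refine ⟨univ.image (fun j => f j (l j)) ∪ univ.image (fun j => g j (k j)),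
    fun P hPE hPne hP => ?_, ?_⟩
  · rcases hP with haP | hbP
    · obtain ⟨j, hj⟩ := hfP P hPE hPne haP
      exact ⟨f j (l j), hj _,
        mem_union_left _ (mem_image_of_mem _ (mem_univ _))⟩
    · obtain ⟨j, hj⟩ := hgP P hPE hPne hbP
      exact ⟨g j (k j), hj _,
        mem_union_right _ (mem_image_of_mem _ (mem_univ _))⟩
  · simp only [mem_union, mem_image, mem_univ, true_and]
    rintro _ (⟨j, rfl⟩ | ⟨j, rfl⟩) _ (⟨j', rfl⟩ | ⟨j', rfl⟩)
    exacts [hl j j', hlk j j', hsymm _ _ (hlk j' j), hk j j']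

end Transversal

section ClanExistence

variable [OrderBot B] [OrderTop B]

theorem exists_isClan_of_contact (hsymm : ∀ a b, C a b → C b a) (hA1 : AxiomA1 C) {a b : B}
    (hab : C a b) : ∃ Γ, IsClan C Γ ∧ a ∈ Γ ∧ b ∈ Γ := by
  classical
  have hfin : ∀ F : Finset B, ∃ S : Finset B,
      a ∈ S ∧ b ∈ S ∧ IsPrimeUpperIn F S ∧ ∀ s ∈ S, ∀ s' ∈ S, C s s' := by
    intro F
    have ha : a ∈ insert a (insert b F) := mem_insert_self _ _
    have hb : b ∈ insert a (insert b F) := mem_insert_of_mem (mem_insert_self _ _)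
    obtain ⟨S₀, hS₀, hC₀⟩ := exists_transversal_of_axiomA1 hsymm hA1 ha hb hab
    obtain ⟨S, hSS₀, hS, hprime⟩ :=
      hS₀.exists_isPrimeUpperIn_subset ((isUpperSet_Ici a).union (isUpperSet_Ici b))
    exact ⟨S, hS.mem ha (Or.inl le_rfl), hS.mem hb (Or.inr le_rfl),
      hprime.mono ((subset_insert _ _).trans (subset_insert _ _)),
      fun s hs s' hs' => hC₀ s (hSS₀ hs) s' (hSS₀ hs')⟩
  choose S haS hbS hprime hC using hfin
  obtain ⟨Γ, hΓ, hmem, -⟩ := exists_isClan_of_finite S (fun F => ⟨a, haS F⟩) hprime hC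
  exact ⟨Γ, hΓ, hmem a haS, hmem b hbS⟩

theorem exists_isClan_of_not_le (hA : AxiomA C) {a u : B} (hau : ¬ a ≤ u) :
    ∃ Γ, IsClan C Γ ∧ a ∈ Γ ∧ u ∉ Γ := by
  classical
  have hfin : ∀ F : Finset B, ∃ S : Finset B,
      a ∈ S ∧ (∀ s ∈ S, ¬ s ≤ u) ∧ IsPrimeUpperIn F S ∧ ∀ s ∈ S, ∀ s' ∈ S, C s s' := by
    intro F
    have ha : a ∈ insert a F := mem_insert_self _ _
    obtain ⟨S₀, hS₀, hu₀, hC₀⟩ := exists_transversal_of_axiomA hA ha hau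
    obtain ⟨S, hSS₀, hS, hprime⟩ := hS₀.exists_isPrimeUpperIn_subset (isUpperSet_Ici a)
    exact ⟨S, hS.mem ha le_rfl, fun s hs => hu₀ s (hSS₀ hs), hprime.mono (subset_insert _ _),
      fun s hs s' hs' => hC₀ s (hSS₀ hs) s' (hSS₀ hs')⟩
  choose S haS huS hprime hC using hfin
  obtain ⟨Γ, hΓ, hmem, hsupp⟩ := exists_isClan_of_finite S (fun F => ⟨a, haS F⟩) hprime hC
  refine ⟨Γ, hΓ, hmem a haS, fun hu => ?_⟩
  obtain ⟨F, hF⟩ := hsupp u hu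
  exact huS F u hF le_rfl

end ClanExistence

variable [OrderTop B]

variable (C) in
def ClanSpace : Type u := {Γ : Set B // IsClan C Γ}

namespace ClanSpace

variable (C) in
def containing (e : B) : Set (ClanSpace C) := {Γ | e ∈ Γ.1}

instance : TopologicalSpace (ClanSpace C) :=
  generateFrom {v | ∃ e, containing C e = v ∨ (containing C e)ᶜ = v}

theorem isClopen_containing (e : B) : IsClopen (containing C e) :=
  ⟨⟨isOpen_generateFrom_of_mem ⟨e, Or.inr rfl⟩⟩, isOpen_generateFrom_of_mem ⟨e, Or.inl rfl⟩⟩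

theorem isTopologicalBasis_isClopen : IsTopologicalBasis {v : Set (ClanSpace C) | IsClopen v} :=
  isTopologicalBasis_isClopen_of_generateFrom rfl <| by
    rintro v ⟨e, rfl | rfl⟩
    exacts [isClopen_containing e, (isClopen_containing e).compl]

theorem closure_interior_containing (e : B) :
    closure (interior (containing C e)) = containing C e := by
  rw [(isClopen_containing e).isOpen.interior_eq, (isClopen_containing e).isClosed.closure_eq]

theorem containing_sup (a b : B) : containing C (a ⊔ b) = containing C a ∪ containing C b :=
  Set.ext fun Γ => ⟨Γ.2.mem_or_mem,
    fun h => h.elim (Γ.2.isUpperSet le_sup_left) (Γ.2.isUpperSet le_sup_right)⟩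

theorem containing_top : containing C ⊤ = Set.univ :=
  Set.eq_univ_of_forall fun Γ => Γ.2.top_mem

instance : T0Space (ClanSpace C) :=
  ⟨fun _ _ h => Subtype.ext <| Set.ext fun e =>
    inseparable_iff_forall_isOpen.1 h _ (isClopen_containing e).isOpen⟩

instance : CompactSpace (ClanSpace C) := by
  refine ⟨isCompact_iff_ultrafilter_le_nhds.2 fun 𝒱 _ => ?_⟩
  have hΓ : IsClan C {e | containing C e ∈ 𝒱} :=
    { top_mem := show containing C ⊤ ∈ 𝒱 from containing_top (C := C) ▸ Filter.univ_mem
      isUpperSet := fun x y hxy hx =>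
        Filter.mem_of_superset hx fun Δ hΔ => Δ.2.isUpperSet hxy hΔ
      mem_or_mem := fun h => Ultrafilter.union_mem_iff.1 (containing_sup (C := C) _ _ ▸ h)
      contact := fun x hx y hy => by
        obtain ⟨Δ, hxΔ, hyΔ⟩ := Ultrafilter.nonempty_of_mem (Filter.inter_mem hx hy)
        exact Δ.2.contact x hxΔ y hyΔ }
  refine ⟨⟨_, hΓ⟩, Set.mem_univ _, ?_⟩
  refine le_trans (le_iInf₂ ?_) nhds_generateFrom.ge
  rintro _ ⟨hmem, e, rfl | rfl⟩
  · exact Filter.le_principal_iff.2 hmem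
  · exact Filter.le_principal_iff.2 (Ultrafilter.compl_mem_iff_notMem.2 hmem)

section

variable [OrderBot B]

theorem containing_bot (hC : ∀ a b, C a b → a ≠ ⊥) : containing C ⊥ = ∅ :=
  Set.eq_empty_of_forall_notMem fun Γ hΓ => hC ⊥ ⊥ (Γ.2.contact ⊥ hΓ ⊥ hΓ) rfl

theorem containing_subset_containing_iff (hA : AxiomA C) {a b : B} :
    containing C a ⊆ containing C b ↔ a ≤ b := by
  refine ⟨fun h => ?_, fun hab Γ hΓ => Γ.2.isUpperSet hab hΓ⟩
  by_contra hab
  obtain ⟨Γ, hΓ, haΓ, hbΓ⟩ := exists_isClan_of_not_le hA hab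
  exact hbΓ (h (show (⟨Γ, hΓ⟩ : ClanSpace C) ∈ containing C a from haΓ))

theorem containing_inter_nonempty_iff (hsymm : ∀ a b, C a b → C b a) (hA1 : AxiomA1 C)
    {a b : B} : (containing C a ∩ containing C b).Nonempty ↔ C a b := by
  refine ⟨fun ⟨Γ, haΓ, hbΓ⟩ => Γ.2.contact a haΓ b hbΓ, fun hab => ?_⟩
  obtain ⟨Γ, hΓ, haΓ, hbΓ⟩ := exists_isClan_of_contact hsymm hA1 hab
  exact ⟨⟨Γ, hΓ⟩, haΓ, hbΓ⟩

end

end ClanSpace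

end CJS

open CJS

/-- Topological representation theorem of CJS: every contact
join-semilattice embeds isomorphically into the regular closed subsets of some
compact, semiregular, T₀ topological space, with contact given by nonempty
intersection. Semiregularity means that the regular open sets
(`u = interior (closure u)`) form a base of the topology. -/
theorem stmt_12 {B : Type u} [SemilatticeSup B] [OrderBot B] [OrderTop B]
    (C : B → B → Prop)
    (h9 : ∀ a b : B, C a b → a ≠ ⊥)
    (h10 : ∀ a b : B, C a b → C b a)
    (hA1 : ∀ m i : ℕ, 1 ≤ m → 1 ≤ i →
      ∀ (x y : B) (s t : Fin m → B) (s' t' : Fin m → Fin i → B),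
      C x y → (∀ j, x ≤ s j) → (∀ j, y ≤ t j) →
      (∀ j, s j = Finset.univ.sup (s' j)) → (∀ j, t j = Finset.univ.sup (t' j)) →
      ∃ l k : Fin m → Fin i,
        (∀ j u, C (s' j (l j)) (s' u (l u))) ∧
        (∀ j u, C (t' j (k j)) (t' u (k u))) ∧
        (∀ j u, C (s' j (l j)) (t' u (k u))))
    (hA : ∀ n i : ℕ, 1 ≤ n → 1 ≤ i →
      ∀ (t u : B) (x : Fin n → B) (x' : Fin n → Fin i → B),
      ¬ t ≤ u → (∀ k, t ≤ x k) → (∀ k, x k = Finset.univ.sup (x' k)) →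
      ∃ j : Fin n → Fin i,
        (∀ k, ¬ x' k (j k) ≤ u) ∧
        (∀ k l, C (x' k (j k)) (x' l (j l)))) :
    ∃ (X : Type u) (_ : TopologicalSpace X),
      CompactSpace X ∧ T0Space X ∧
      TopologicalSpace.IsTopologicalBasis {v : Set X | v = interior (closure v)} ∧
      ∃ h : B → Set X,
        (∀ a : B, h a = closure (interior (h a))) ∧
        Function.Injective h ∧
        h ⊥ = ∅ ∧ h ⊤ = Set.univ ∧
        (∀ a b : B, h (a ⊔ b) = h a ∪ h b) ∧
        (∀ a b : B, a ≤ b ↔ h a ⊆ h b) ∧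
        (∀ a b : B, C a b ↔ (h a ∩ h b).Nonempty) := by
  have hle (a b : B) : a ≤ b ↔ ClanSpace.containing C a ⊆ ClanSpace.containing C b :=
    (ClanSpace.containing_subset_containing_iff hA).symm
  refine ⟨ClanSpace C, inferInstance, inferInstance, inferInstance,
    ClanSpace.isTopologicalBasis_isClopen.regularOpen_of_isClopen, ClanSpace.containing C,
    fun a => (ClanSpace.closure_interior_containing a).symm, fun a b hab => le_antisymm ((hle a b).2 hab.le) ((hle b a).2 hab.ge),
    ClanSpace.containing_bot h9, ClanSpace.containing_top, ClanSpace.containing_sup, hle,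
    fun a b => (ClanSpace.containing_inter_nonempty_iff h10 hA1).symm⟩
end

section
/- Let B be a distributive contact join-semilattice, let Γ be a clan of B, and let a ∈ Γ. Then there exists an abstract point U of B such that a ∈ U and U ⊆ Γ. -/
/-- An abstract point of a distributive contact join-semilattice. -/
def IsAbstractPoint {B : Type*} [SemilatticeSup B] [OrderBot B] [OrderTop B]
    (Γ : Set B) : Prop :=
  (⊤ : B) ∈ Γ ∧ (⊥ : B) ∉ Γ ∧
  (∀ x y : B, x ∈ Γ → x ≤ y → y ∈ Γ) ∧
  (∀ x y : B, x ∈ Γ → y ∈ Γ → ∃ z : B, z ≤ x ∧ z ≤ y ∧ z ∈ Γ) ∧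
  (∀ x y : B, x ⊔ y ∈ Γ → x ∈ Γ ∨ y ∈ Γ)

/-- In a distributive contact join-semilattice, if `Γ` is a clan
and `a ∈ Γ`, then there is an abstract point `U` with `a ∈ U` and `U ⊆ Γ`. -/
theorem stmt_14 {B : Type*} [SemilatticeSup B] [OrderBot B] [OrderTop B]
    (C : B → B → Prop)
    (h9 : ∀ a b : B, C a b → a ≠ ⊥)
    (h10 : ∀ a b : B, C a b → C b a)
    (h11 : ∀ a b c : B, C a (b ⊔ c) → C a b ∨ C a c)
    (h12 : ∀ a b b' : B, C a b → b ≤ b' → C a b')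
    (h13 : ∀ a : B, a ≠ ⊥ → C a a)
    (had : ∀ x a b : B, x ≤ a ⊔ b → ∃ a' b' : B, a' ≤ a ∧ b' ≤ b ∧ x = a' ⊔ b')
    (Γ : Set B) (hΓ : IsClan C Γ) (a : B) (ha : a ∈ Γ) :
    ∃ U : Set B, IsAbstractPoint U ∧ a ∈ U ∧ U ⊆ Γ := by
  obtain ⟨htop, hbot, hup, hcon, hprime⟩ := hΓ
  -- family of ideals containing Γᶜ and avoiding a
  set S : Set (Set B) := {I | (∀ w ∈ I, ∀ v, v ≤ w → v ∈ I) ∧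
      (∀ w ∈ I, ∀ v ∈ I, w ⊔ v ∈ I) ∧ Γᶜ ⊆ I ∧ a ∉ I} with hS
  have hΓc : Γᶜ ∈ S := by
    refine ⟨?_, ?_, subset_rfl, fun h => h ha⟩
    · intro w hw v hv hvΓ
      exact hw (hup v w hvΓ hv)
    · intro w hw v hv h
      rcases hprime w v h with h' | h'
      · exact hw h'
      · exact hv h'
  obtain ⟨I, hIΓc, hIS, hImax⟩ := zorn_subset_nonempty S (by
    intro c hcS hchain hcne
    refine ⟨⋃₀ c, ⟨?_, ?_, ?_, ?_⟩, fun s hs => Set.subset_sUnion_of_mem hs⟩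
    · rintro w ⟨t, htc, hwt⟩ v hv
      exact ⟨t, htc, (hcS htc).1 w hwt v hv⟩
    · rintro w ⟨t, htc, hwt⟩ v ⟨t', ht'c, hvt'⟩
      rcases hchain.total htc ht'c with h | h
      · exact ⟨t', ht'c, (hcS ht'c).2.1 w (h hwt) v hvt'⟩
      · exact ⟨t, htc, (hcS htc).2.1 w hwt v (h hvt')⟩
    · obtain ⟨t, htc⟩ := hcne
      exact (hcS htc).2.2.1.trans (Set.subset_sUnion_of_mem htc)
    · rintro ⟨t, htc, hat⟩
      exact (hcS htc).2.2.2 hat) Γᶜ hΓc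
  obtain ⟨hIdown, hIjoin, hIΓc', haI⟩ := hIS
  -- key: if x ∉ I then a is below x ⊔ i for some i ∈ I
  have key : ∀ x : B, x ∉ I → ∃ i ∈ I, a ≤ x ⊔ i := by
    intro x hx
    by_contra hcon'
    push_neg at hcon'
    -- the ideal generated by I and x
    have hJ : {w : B | ∃ i ∈ I, w ≤ x ⊔ i} ∈ S := by
      refine ⟨?_, ?_, ?_, ?_⟩
      · rintro w ⟨i, hi, hwi⟩ v hv
        exact ⟨i, hi, hv.trans hwi⟩
      · rintro w ⟨i, hi, hwi⟩ v ⟨i', hi', hvi'⟩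
        exact ⟨i ⊔ i', hIjoin i hi i' hi',
          sup_le (hwi.trans (sup_le_sup_left le_sup_left x))
            (hvi'.trans (sup_le_sup_left le_sup_right x))⟩
      · intro w hw
        exact ⟨w, hIΓc' hw, le_sup_right⟩
      · rintro ⟨i, hi, hai⟩
        exact hcon' i hi hai
    have hsub : I ⊆ {w : B | ∃ i ∈ I, w ≤ x ⊔ i} := fun w hw => ⟨w, hw, le_sup_right⟩
    have hbotI : (⊥ : B) ∈ I := hIΓc' hbot
    exact hx (hImax hJ hsub ⟨⊥, hbotI, le_sup_left⟩)
  -- U is the complement of I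
  refine ⟨Iᶜ, ⟨?_, ?_, ?_, ?_, ?_⟩, haI, ?_⟩
  · intro hT
    exact haI (hIdown ⊤ hT a le_top)
  · intro h
    exact h (hIΓc' hbot)
  · intro x y hx hxy hy
    exact hx (hIdown y hy x hxy)
  · intro x y hx hy
    obtain ⟨i₁, hi₁, hai₁⟩ := key x hx
    obtain ⟨x', i₁', hx'x, hi₁'le, hax'⟩ := had a x i₁ hai₁
    have hi₁' : i₁' ∈ I := hIdown i₁ hi₁ i₁' hi₁'le
    have hx'I : x' ∉ I := fun h => haI (hax' ▸ hIjoin x' h i₁' hi₁')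
    obtain ⟨i₂, hi₂, hai₂⟩ := key y hy
    have hx'le : x' ≤ y ⊔ i₂ := le_trans (hax' ▸ le_sup_left) hai₂
    obtain ⟨y', i₂', hy'y, hi₂'le, hx'eq⟩ := had x' y i₂ hx'le
    have hi₂' : i₂' ∈ I := hIdown i₂ hi₂ i₂' hi₂'le
    have hy'I : y' ∉ I := fun h => hx'I (hx'eq ▸ hIjoin y' h i₂' hi₂')
    exact ⟨y', le_trans (hx'eq ▸ le_sup_left) hx'x, hy'y, hy'I⟩
  · intro x y hxy
    by_contra h
    push_neg at h
    obtain ⟨hx, hy⟩ := h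
    simp only [Set.mem_compl_iff, not_not] at hx hy
    exact hxy (hIjoin x hx y hy)
  · intro w hw
    by_contra hwΓ
    exact hw (hIΓc' hwΓ)
end

section
/- Let B be a distributive contact join-semilattice and let Γ be a clan of B. Then there exists a set Σ of abstract points of B such that Γ = ⋃Σ and for any U, V ∈ Σ, x ∈ U and y ∈ V imply xCy. -/
private lemma exists_abstract_point {B : Type*} [SemilatticeSup B] [OrderBot B] [OrderTop B] (C : B → B → Prop)
    (had : ∀ x a b : B, x ≤ a ⊔ b → ∃ a' b' : B, a' ≤ a ∧ b' ≤ b ∧ x = a' ⊔ b')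
    (Γ : Set B)
    (htop : (⊤:B) ∈ Γ) (hbot : (⊥:B) ∉ Γ)
    (hup : ∀ x y : B, x ∈ Γ → x ≤ y → y ∈ Γ)
    (hprime : ∀ x y : B, x ⊔ y ∈ Γ → x ∈ Γ ∨ y ∈ Γ)
    (a : B) (ha : a ∈ Γ) :
    ∃ U : Set B, IsAbstractPoint U ∧ U ⊆ Γ ∧ a ∈ U := by
  set 𝒮 : Set (Set B) := {I | Γᶜ ⊆ I ∧ a ∉ I ∧ (∀ x y : B, y ∈ I → x ≤ y → x ∈ I) ∧
      ∀ x y : B, x ∈ I → y ∈ I → x ⊔ y ∈ I} with hSdef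
  have hΓc : Γᶜ ∈ 𝒮 := by
    refine ⟨subset_rfl, by simpa using ha, fun x y hy hxy hx => hy (hup x y hx hxy),
      fun x y hx hy hxy => (hprime x y hxy).elim hx hy⟩
  obtain ⟨I, -, hIS, hImax⟩ : ∃ I, Γᶜ ⊆ I ∧ Maximal (· ∈ 𝒮) I := by
    refine zorn_subset_nonempty 𝒮 ?_ _ hΓc
    intro c hc hchain hne
    refine ⟨⋃₀ c, ⟨?_, ?_, ?_, ?_⟩, fun s hs => Set.subset_sUnion_of_mem hs⟩
    · obtain ⟨s, hs⟩ := hne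
      exact (hc hs).1.trans (Set.subset_sUnion_of_mem hs)
    · rintro ⟨s, hs, has⟩
      exact (hc hs).2.1 has
    · rintro x y ⟨s, hs, hys⟩ hxy
      exact ⟨s, hs, (hc hs).2.2.1 x y hys hxy⟩
    · rintro x y ⟨s, hs, hxs⟩ ⟨t, ht, hyt⟩
      rcases hchain.total hs ht with hst | hts
      · exact ⟨t, ht, (hc ht).2.2.2 x y (hst hxs) hyt⟩
      · exact ⟨s, hs, (hc hs).2.2.2 x y hxs (hts hyt)⟩
  obtain ⟨hIc, haI, hIdown, hIsup⟩ := hIS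
  -- key: for x ∉ I, a ≤ i ⊔ x for some i ∈ I
  have key : ∀ x : B, x ∉ I → ∃ i ∈ I, a ≤ i ⊔ x := by
    intro x hx
    by_contra hcon
    push_neg at hcon
    have : {b : B | ∃ i ∈ I, b ≤ i ⊔ x} ∈ 𝒮 := by
      refine ⟨fun b hb => ⟨b, hIc hb, le_sup_left⟩, ?_, ?_, ?_⟩
      · rintro ⟨i, hi, hai⟩; exact hcon i hi hai
      · rintro b b' ⟨i, hi, hb'⟩ hbb'; exact ⟨i, hi, hbb'.trans hb'⟩
      · rintro b b' ⟨i, hi, hb⟩ ⟨j, hj, hb'⟩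
        exact ⟨i ⊔ j, hIsup i j hi hj,
          sup_le (hb.trans (sup_le_sup le_sup_left le_rfl))
            (hb'.trans (sup_le_sup le_sup_right le_rfl))⟩
    exact hx (hImax this (fun b hb => ⟨b, hb, le_sup_left⟩)
      ⟨⊥, hIc (by simpa using hbot), by simp⟩)
  refine ⟨Iᶜ, ⟨?_, ?_, ?_, ?_, ?_⟩, ?_, haI⟩
  · exact fun h => haI (hIdown a ⊤ h le_top)
  · simpa using hIc (by simpa using hbot)
  · exact fun x y hx hxy hy => hx (hIdown x y hy hxy)
  · intro x y hx hy
    obtain ⟨i, hi, hai⟩ := key x hx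
    obtain ⟨a1, a2, ha1, ha2, haeq⟩ := had a i x hai
    have ha2I : a2 ∉ I := by
      intro h
      exact haI (haeq ▸ hIsup a1 a2 (hIdown a1 i hi ha1) h)
    obtain ⟨j, hj, haj⟩ := key y hy
    obtain ⟨u, v, hu, hv, heq⟩ := had a2 j y ((haeq ▸ le_sup_right).trans haj)
    have hvI : v ∉ I := fun h => ha2I (heq ▸ hIsup u v (hIdown u j hj hu) h)
    exact ⟨v, (heq ▸ le_sup_right : v ≤ a2).trans ha2, hv, hvI⟩
  · intro x y hxy
    by_contra h
    push_neg at h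
    simp only [Set.mem_compl_iff, not_not] at h
    exact hxy (hIsup x y h.1 h.2)
  · intro b hb
    by_contra hbΓ
    exact hb (hIc hbΓ)

/-- In a distributive contact join-semilattice, every clan `Γ` is
the union of a set `Σ` of abstract points such that any two members of `Σ` are
in "pairwise contact": `x ∈ U` and `y ∈ V` imply `xCy`. -/
theorem stmt_15 {B : Type*} [SemilatticeSup B] [OrderBot B] [OrderTop B]
    (C : B → B → Prop)
    (h9 : ∀ a b : B, C a b → a ≠ ⊥)
    (h10 : ∀ a b : B, C a b → C b a)
    (h11 : ∀ a b c : B, C a (b ⊔ c) → C a b ∨ C a c)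
    (h12 : ∀ a b b' : B, C a b → b ≤ b' → C a b')
    (h13 : ∀ a : B, a ≠ ⊥ → C a a)
    (had : ∀ x a b : B, x ≤ a ⊔ b → ∃ a' b' : B, a' ≤ a ∧ b' ≤ b ∧ x = a' ⊔ b')
    (Γ : Set B) (hΓ : IsClan C Γ) :
    ∃ S : Set (Set B), (∀ U ∈ S, IsAbstractPoint U) ∧ Γ = ⋃₀ S ∧
      ∀ U ∈ S, ∀ V ∈ S, ∀ x ∈ U, ∀ y ∈ V, C x y := by
  obtain ⟨htop, hbot, hup, hC, hprime⟩ := hΓ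
  refine ⟨{U | IsAbstractPoint U ∧ U ⊆ Γ}, fun U hU => hU.1, ?_, ?_⟩
  · apply Set.Subset.antisymm
    · intro a ha
      obtain ⟨U, hU, hUΓ, haU⟩ := exists_abstract_point C had Γ htop hbot hup hprime a ha
      exact ⟨U, ⟨hU, hUΓ⟩, haU⟩
    · rintro a ⟨U, ⟨-, hUΓ⟩, haU⟩
      exact hUΓ haU
  · rintro U ⟨-, hUΓ⟩ V ⟨-, hVΓ⟩ x hx y hy
    exact hC x y (hUΓ hx) (hVΓ hy)
end

section
/- Let B be a distributive contact join-semilattice. Then every abstract point of B is a clan of B; in particular, any two elements of an abstract point are in contact. -/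
/-- In a distributive contact join-semilattice, every abstract
point is a clan; in particular any two elements of an abstract point are in
contact. -/
theorem stmt_16 {B : Type*} [SemilatticeSup B] [OrderBot B] [OrderTop B]
    (C : B → B → Prop)
    (h9 : ∀ a b : B, C a b → a ≠ ⊥)
    (h10 : ∀ a b : B, C a b → C b a)
    (h11 : ∀ a b c : B, C a (b ⊔ c) → C a b ∨ C a c)
    (h12 : ∀ a b b' : B, C a b → b ≤ b' → C a b')
    (h13 : ∀ a : B, a ≠ ⊥ → C a a)
    (had : ∀ x a b : B, x ≤ a ⊔ b → ∃ a' b' : B, a' ≤ a ∧ b' ≤ b ∧ x = a' ⊔ b')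
    (Γ : Set B) (hΓ : IsAbstractPoint Γ) :
    IsClan C Γ ∧ ∀ x ∈ Γ, ∀ y ∈ Γ, C x y := by
  obtain ⟨ht, hb, hup, hmeet, hsplit⟩ := hΓ
  have key : ∀ x ∈ Γ, ∀ y ∈ Γ, C x y := by
    intro x hx y hy
    obtain ⟨z, hzx, hzy, hz⟩ := hmeet x y hx hy
    have hzne : z ≠ ⊥ := fun h => hb (h ▸ hz)
    have := h12 z z y (h13 z hzne) hzy
    exact h10 y x (h12 y z x (h10 z y this) hzx)
  exact ⟨⟨ht, hb, hup, fun x y hx hy => key x hx y hy, hsplit⟩, key⟩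
end

section
/- Let B be a distributive contact join-semilattice and suppose t ≰ u. Then there exists an abstract point U of B such that t ∈ U and u ∉ U. -/
/-- In a distributive contact join-semilattice, if `t ≰ u` then
there is an abstract point `U` with `t ∈ U` and `u ∉ U`. -/
theorem stmt_17 {B : Type*} [SemilatticeSup B] [OrderBot B] [OrderTop B]
    (C : B → B → Prop)
    (h9 : ∀ a b : B, C a b → a ≠ ⊥)
    (h10 : ∀ a b : B, C a b → C b a)
    (h11 : ∀ a b c : B, C a (b ⊔ c) → C a b ∨ C a c)
    (h12 : ∀ a b b' : B, C a b → b ≤ b' → C a b')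
    (h13 : ∀ a : B, a ≠ ⊥ → C a a)
    (had : ∀ x a b : B, x ≤ a ⊔ b → ∃ a' b' : B, a' ≤ a ∧ b' ≤ b ∧ x = a' ⊔ b')
    (t u : B) (h : ¬ t ≤ u) :
    ∃ U : Set B, IsAbstractPoint U ∧ t ∈ U ∧ u ∉ U := by
  classical
  -- Work with ideals: downward closed, join closed, containing u, missing t.
  set S : Set (Set B) :=
    {J | (∀ w j : B, j ∈ J → w ≤ j → w ∈ J) ∧
         (∀ a b : B, a ∈ J → b ∈ J → a ⊔ b ∈ J) ∧ u ∈ J ∧ t ∉ J} with hS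
  have hJ0 : {w : B | w ≤ u} ∈ S := by
    refine ⟨fun w j hj hw => le_trans hw hj, fun a b ha hb => sup_le ha hb, le_rfl, h⟩
  obtain ⟨M, -, hMS, hMmax⟩ := zorn_subset_nonempty S (fun c hcS hc hne => by
    obtain ⟨J₁, hJ₁⟩ := hne
    refine ⟨⋃₀ c, ⟨?_, ?_, ?_, ?_⟩, fun s hs => Set.subset_sUnion_of_mem hs⟩
    · rintro w j ⟨J, hJ, hjJ⟩ hw
      exact ⟨J, hJ, (hcS hJ).1 w j hjJ hw⟩
    · rintro a b ⟨Ja, hJa, haJ⟩ ⟨Jb, hJb, hbJ⟩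
      rcases hc.total hJa hJb with h' | h'
      · exact ⟨Jb, hJb, (hcS hJb).2.1 a b (h' haJ) hbJ⟩
      · exact ⟨Ja, hJa, (hcS hJa).2.1 a b haJ (h' hbJ)⟩
    · exact ⟨J₁, hJ₁, (hcS hJ₁).2.2.1⟩
    · rintro ⟨J, hJ, htJ⟩
      exact (hcS hJ).2.2.2 htJ) {w | w ≤ u} hJ0
  obtain ⟨hMdown, hMsup, huM, htM⟩ := hMS
  -- auxiliary: if x ∉ M, then t ≤ j ⊔ x for some j ∈ M
  have key : ∀ x : B, x ∉ M → ∃ j ∈ M, t ≤ j ⊔ x := by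
    intro x hx
    by_contra hcon
    push_neg at hcon
    have hMx : {w : B | ∃ j ∈ M, w ≤ j ⊔ x} ∈ S := by
      refine ⟨?_, ?_, ⟨u, huM, le_sup_left⟩, ?_⟩
      · rintro w j ⟨j', hj', hle⟩ hw
        exact ⟨j', hj', hw.trans hle⟩
      · rintro a b ⟨ja, hja, haj⟩ ⟨jb, hjb, hbj⟩
        refine ⟨ja ⊔ jb, hMsup _ _ hja hjb, sup_le ?_ ?_⟩
        · exact haj.trans (sup_le (le_sup_left.trans le_sup_left) le_sup_right)
        · exact hbj.trans (sup_le (le_sup_right.trans le_sup_left) le_sup_right)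
      · rintro ⟨j, hj, hle⟩
        exact hcon j hj hle
    have hsub : M ⊆ {w : B | ∃ j ∈ M, w ≤ j ⊔ x} := fun w hw => ⟨w, hw, le_sup_left⟩
    exact hx (hMmax hMx hsub ⟨u, huM, le_sup_right⟩)
  refine ⟨Mᶜ, ⟨?_, ?_, ?_, ?_, ?_⟩, htM, fun hu => hu huM⟩
  · exact fun hT => htM (hMdown t ⊤ hT le_top)
  · simp only [Set.mem_compl_iff, not_not]
    exact hMdown ⊥ u huM bot_le
  · exact fun x y hx hxy hy => hx (hMdown x y hy hxy)
  · -- directedness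
    intro x y hx hy
    by_contra hcon
    push_neg at hcon
    have hlow : ∀ z : B, z ≤ x → z ≤ y → z ∈ M := by
      intro z hzx hzy
      by_contra hz
      exact (hcon z hzx hzy) hz
    obtain ⟨j₁, hj₁, ht₁⟩ := key x hx
    obtain ⟨j₂, hj₂, ht₂⟩ := key y hy
    set j := j₁ ⊔ j₂ with hj
    have hjM : j ∈ M := hMsup _ _ hj₁ hj₂
    have ht₁' : t ≤ j ⊔ x := ht₁.trans (sup_le_sup_right le_sup_left x)
    have ht₂' : t ≤ j ⊔ y := ht₂.trans (sup_le_sup_right le_sup_right y)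
    obtain ⟨a, b, haj, hbx, hab⟩ := had t j x ht₁'
    have hb : b ≤ j ⊔ y := le_trans (hab ▸ le_sup_right) ht₂'
    obtain ⟨c, d, hcj, hdy, hcd⟩ := had b j y hb
    have hdx : d ≤ x := le_trans (hcd ▸ le_sup_right) hbx
    have hdM : d ∈ M := hlow d hdx hdy
    have : t ∈ M := by
      have : t ≤ j ⊔ d := by
        rw [hab, hcd]
        exact sup_le (haj.trans le_sup_left)
          (sup_le (hcj.trans le_sup_left) le_sup_right)
      exact hMdown t (j ⊔ d) (hMsup _ _ hjM hdM) this
    exact htM this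
  · -- primality: complement of join-closed set
    intro x y hxy
    by_contra hcon
    push_neg at hcon
    simp only [Set.mem_compl_iff, not_not] at hcon hxy
    exact hxy (hMsup _ _ hcon.1 hcon.2)
end

section
/- (Relational representation theorem of DCJS) Let B be a distributive contact join-semilattice. Then there exist a set W, a reflexive and symmetric binary relation R on W, and a map h : B → 𝒫(W) such that h is injective, h(0) = ∅, h(1) = W, h(a + b) = h(a) ∪ h(b) for all a, b, a ≤ b iff h(a) ⊆ h(b), and aCb iff there exist x ∈ h(a) and y ∈ h(b) with xRy; that is, h is an isomorphic embedding of B into the relational contact algebra of all subsets of W over (W, R). -/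
universe u

namespace DCJS

variable {B : Type u} [SemilatticeSup B] [OrderBot B] [OrderTop B]

/-- Ideals of the join-semilattice `B`. -/
def Idl (I : Set B) : Prop :=
  ⊥ ∈ I ∧ (∀ ⦃x y : B⦄, x ≤ y → y ∈ I → x ∈ I) ∧ ∀ ⦃x y : B⦄, x ∈ I → y ∈ I → x ⊔ y ∈ I

def prin (a : B) : Set B := {x | x ≤ a}

def jn (I J : Set B) : Set B := {x | ∃ i ∈ I, ∃ j ∈ J, x ≤ i ⊔ j}

lemma idl_prin (a : B) : Idl (prin a) :=
  ⟨bot_le, fun _ _ hxy hy => hxy.trans hy, fun _ _ hx hy => sup_le hx hy⟩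

lemma idl_univ : Idl (Set.univ : Set B) :=
  ⟨trivial, fun _ _ _ _ => trivial, fun _ _ _ _ => trivial⟩

lemma idl_inter {I J : Set B} (hI : Idl I) (hJ : Idl J) : Idl (I ∩ J) :=
  ⟨⟨hI.1, hJ.1⟩, fun _ _ h hy => ⟨hI.2.1 h hy.1, hJ.2.1 h hy.2⟩,
   fun _ _ hx hy => ⟨hI.2.2 hx.1 hy.1, hJ.2.2 hx.2 hy.2⟩⟩

lemma mem_prin_self (a : B) : a ∈ prin a := le_refl a

lemma prin_mono {a b : B} (h : a ≤ b) : prin a ⊆ prin b := fun _ hx => le_trans hx h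

lemma prin_bot_subset {I : Set B} (hI : Idl I) : prin ⊥ ⊆ I :=
  fun _ hx => hI.2.1 hx hI.1

lemma prin_sup (a b : B) : prin (a ⊔ b) = jn (prin a) (prin b) := by
  ext x
  constructor
  · intro hx; exact ⟨a, le_refl a, b, le_refl b, hx⟩
  · rintro ⟨i, hi, j, hj, hx⟩
    exact le_trans hx (sup_le (le_trans hi le_sup_left) (le_trans hj le_sup_right))

/-- Filters of ideals. -/
def Fil (F : Set (Set B)) : Prop :=
  (∀ X ∈ F, Idl X) ∧ (∀ X ∈ F, ∀ Y : Set B, Idl Y → X ⊆ Y → Y ∈ F) ∧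
    (∀ X ∈ F, ∀ Y ∈ F, X ∩ Y ∈ F) ∧ (Set.univ : Set B) ∈ F

/-- Filter generated by `F` together with the ideal `X`. -/
def extF (F : Set (Set B)) (X : Set B) : Set (Set B) :=
  {Z | Idl Z ∧ ∃ W ∈ F, W ∩ X ⊆ Z}

lemma fil_extF {F : Set (Set B)} {X : Set B} (hF : Fil F) (hX : Idl X) :
    Fil (extF F X) ∧ F ⊆ extF F X ∧ X ∈ extF F X := by
  refine ⟨⟨fun Z hZ => hZ.1, ?_, ?_, ?_⟩, ?_, ?_⟩
  · rintro Z ⟨_, W, hW, hsub⟩ Y hYi hZY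
    exact ⟨hYi, W, hW, hsub.trans hZY⟩
  · rintro Z ⟨hZi, W, hW, hsub⟩ Z' ⟨hZi', W', hW', hsub'⟩
    refine ⟨idl_inter hZi hZi', W ∩ W', hF.2.2.1 W hW W' hW', ?_⟩
    intro t ht; exact ⟨hsub ⟨ht.1.1, ht.2⟩, hsub' ⟨ht.1.2, ht.2⟩⟩
  · exact ⟨idl_univ, Set.univ, hF.2.2.2, fun t _ => trivial⟩
  · intro Z hZ; exact ⟨hF.1 Z hZ, Z, hZ, fun t ht => ht.1⟩
  · exact ⟨hX, Set.univ, hF.2.2.2, fun t ht => ht.2⟩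

lemma split (had : ∀ x a b : B, x ≤ a ⊔ b → ∃ a' b' : B, a' ≤ a ∧ b' ≤ b ∧ x = a' ⊔ b')
    {W X Y : Set B} (hW : Idl W) (hX : Idl X) (hY : Idl Y) {v : B}
    (hvW : v ∈ W) (hv : v ∈ jn X Y) :
    ∃ i ∈ W ∩ X, ∃ j ∈ W ∩ Y, v = i ⊔ j := by
  obtain ⟨i, hi, j, hj, hle⟩ := hv
  obtain ⟨i', j', hi', hj', hv'⟩ := had v i j hle
  refine ⟨i', ⟨hW.2.1 ?_ hvW, hX.2.1 hi' hi⟩, j', ⟨hW.2.1 ?_ hvW, hY.2.1 hj' hj⟩, hv'⟩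
  · rw [hv']; exact le_sup_left
  · rw [hv']; exact le_sup_right

/-- The lifted contact relation on ideals. -/
def Chat (C : B → B → Prop) (I J : Set B) : Prop := ∃ x ∈ I, ∃ y ∈ J, C x y

lemma chat_mono {C : B → B → Prop} {I J I' J' : Set B} (h : Chat C I J)
    (hI : I ⊆ I') (hJ : J ⊆ J') : Chat C I' J' := by
  obtain ⟨x, hx, y, hy, hxy⟩ := h
  exact ⟨x, hI hx, y, hJ hy, hxy⟩

/-- The type of points: proper prime filters of ideals. -/
def Pt (B : Type u) [SemilatticeSup B] [OrderBot B] [OrderTop B] : Type u :=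
  {F : Set (Set B) // Fil F ∧ (∀ X Y : Set B, Idl X → Idl Y → jn X Y ∈ F → X ∈ F ∨ Y ∈ F) ∧
    prin ⊥ ∉ F}

def Rel (C : B → B → Prop) (F G : Pt B) : Prop := ∀ X ∈ F.1, ∀ Y ∈ G.1, Chat C X Y

def hmap (a : B) : Set (Pt B) := {F | prin a ∈ F.1}

section Zorn

/-- Separation: if `¬ a ≤ b` there is a proper prime filter of ideals containing `↓a` but
not `↓b`. -/
lemma zornA (had : ∀ x a b : B, x ≤ a ⊔ b → ∃ a' b' : B, a' ≤ a ∧ b' ≤ b ∧ x = a' ⊔ b')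
    {a b : B} (hab : ¬ a ≤ b) :
    ∃ F : Set (Set B), Fil F ∧
      (∀ X Y : Set B, Idl X → Idl Y → jn X Y ∈ F → X ∈ F ∨ Y ∈ F) ∧
      prin ⊥ ∉ F ∧ prin a ∈ F ∧ prin b ∉ F := by
  set S : Set (Set (Set B)) := {F | Fil F ∧ prin a ∈ F ∧ prin b ∉ F} with hSdef
  have h0 : {X : Set B | Idl X ∧ prin a ⊆ X} ∈ S := by
    refine ⟨⟨fun X hX => hX.1, ?_, ?_, ⟨idl_univ, fun t _ => trivial⟩⟩, ?_, ?_⟩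
    · rintro X ⟨_, hX2⟩ Y hYi hXY; exact ⟨hYi, hX2.trans hXY⟩
    · rintro X ⟨hX1, hX2⟩ Y ⟨hY1, hY2⟩
      exact ⟨idl_inter hX1 hY1, fun t ht => ⟨hX2 ht, hY2 ht⟩⟩
    · exact ⟨idl_prin a, subset_rfl⟩
    · rintro ⟨-, hsub⟩; exact hab (hsub (mem_prin_self a))
  have hub : ∀ c ⊆ S, IsChain (· ⊆ ·) c → c.Nonempty → ∃ ub ∈ S, ∀ s ∈ c, s ⊆ ub := by
    intro c hc hchain hne
    obtain ⟨F₁, hF₁⟩ := hne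
    refine ⟨⋃₀ c, ⟨⟨?_, ?_, ?_, ?_⟩, ?_, ?_⟩, fun s hs => Set.subset_sUnion_of_mem hs⟩
    · rintro X ⟨F, hF, hX⟩; exact (hc hF).1.1 X hX
    · rintro X ⟨F, hF, hX⟩ Y hYi hXY
      exact ⟨F, hF, (hc hF).1.2.1 X hX Y hYi hXY⟩
    · rintro X ⟨F, hF, hX⟩ Y ⟨G, hG, hY⟩
      rcases hchain.total hF hG with h | h
      · exact ⟨G, hG, (hc hG).1.2.2.1 X (h hX) Y hY⟩
      · exact ⟨F, hF, (hc hF).1.2.2.1 X hX Y (h hY)⟩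
    · exact ⟨F₁, hF₁, (hc hF₁).1.2.2.2⟩
    · exact ⟨F₁, hF₁, (hc hF₁).2.1⟩
    · rintro ⟨F, hF, hX⟩; exact (hc hF).2.2 hX
  obtain ⟨F, -, hmax⟩ := zorn_subset_nonempty S hub _ h0
  obtain ⟨⟨hF, hpa, hpb⟩, hmax2⟩ := hmax
  have hproper : prin ⊥ ∉ F := fun h =>
    hpb (hF.2.1 _ h _ (idl_prin b) (prin_bot_subset (idl_prin b)))
  refine ⟨F, hF, ?_, hproper, hpa, hpb⟩
  intro X Y hXi hYi hXY
  by_contra hcon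
  push_neg at hcon
  obtain ⟨hXn, hYn⟩ := hcon
  have key : ∀ Z : Set B, Idl Z → Z ∉ F → ∃ W ∈ F, W ∩ Z ⊆ prin b := by
    intro Z hZi hZn
    by_contra hk
    push_neg at hk
    have he := fil_extF hF hZi
    have hmem : prin b ∉ extF F Z := by
      rintro ⟨-, W, hW, hsub⟩; exact hk W hW hsub
    have hin : extF F Z ∈ S := ⟨he.1, he.2.1 hpa, hmem⟩
    exact hZn (hmax2 hin he.2.1 he.2.2)
  obtain ⟨W₁, hW₁, hs₁⟩ := key X hXi hXn
  obtain ⟨W₂, hW₂, hs₂⟩ := key Y hYi hYn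
  have hWW : W₁ ∩ W₂ ∈ F := hF.2.2.1 _ hW₁ _ hW₂
  have hV : (W₁ ∩ W₂) ∩ jn X Y ∈ F := hF.2.2.1 _ hWW _ hXY
  have hVsub : (W₁ ∩ W₂) ∩ jn X Y ⊆ prin b := by
    rintro v ⟨hvW, hvj⟩
    obtain ⟨i, ⟨hiW, hiX⟩, j, ⟨hjW, hjY⟩, hv⟩ :=
      split had (idl_inter (hF.1 _ hW₁) (hF.1 _ hW₂)) hXi hYi hvW hvj
    have hib : i ≤ b := hs₁ ⟨hiW.1, hiX⟩
    have hjb : j ≤ b := hs₂ ⟨hjW.2, hjY⟩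
    show v ≤ b
    rw [hv]; exact sup_le hib hjb
  exact hpb (hF.2.1 _ hV _ (idl_prin b) hVsub)

def side (t : Bool) (S : Set (Bool × Set B)) : Set (Set B) := {X | (t, X) ∈ S}

/-- Contact witnesses: if `C a b` there is a pair of proper prime filters of ideals
containing `↓a`, `↓b` respectively, all of whose members are in lifted contact. -/
lemma zornB {C : B → B → Prop}
    (had : ∀ x a b : B, x ≤ a ⊔ b → ∃ a' b' : B, a' ≤ a ∧ b' ≤ b ∧ x = a' ⊔ b')
    (h9 : ∀ a b : B, C a b → a ≠ ⊥)
    (h10 : ∀ a b : B, C a b → C b a)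
    (h11 : ∀ a b c : B, C a (b ⊔ c) → C a b ∨ C a c)
    {a b : B} (hab : C a b) :
    ∃ F G : Set (Set B),
      (Fil F ∧ (∀ X Y : Set B, Idl X → Idl Y → jn X Y ∈ F → X ∈ F ∨ Y ∈ F) ∧ prin ⊥ ∉ F) ∧
      (Fil G ∧ (∀ X Y : Set B, Idl X → Idl Y → jn X Y ∈ G → X ∈ G ∨ Y ∈ G) ∧ prin ⊥ ∉ G) ∧
      prin a ∈ F ∧ prin b ∈ G ∧ ∀ X ∈ F, ∀ Y ∈ G, Chat C X Y := by
  set S : Set (Set (Bool × Set B)) :=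
    {S | Fil (side true S) ∧ Fil (side false S) ∧ prin a ∈ side true S ∧
      prin b ∈ side false S ∧ ∀ X ∈ side true S, ∀ Y ∈ side false S, Chat C X Y} with hSdef
  have hFil0 : ∀ c : B, Fil {X : Set B | Idl X ∧ prin c ⊆ X} := by
    intro c
    refine ⟨fun X hX => hX.1, ?_, ?_, ⟨idl_univ, fun t _ => trivial⟩⟩
    · rintro X ⟨_, hX2⟩ Y hYi hXY; exact ⟨hYi, hX2.trans hXY⟩
    · rintro X ⟨hX1, hX2⟩ Y ⟨hY1, hY2⟩
      exact ⟨idl_inter hX1 hY1, fun t ht => ⟨hX2 ht, hY2 ht⟩⟩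
  have h0 : {p : Bool × Set B | (p.1 = true ∧ Idl p.2 ∧ prin a ⊆ p.2) ∨
      (p.1 = false ∧ Idl p.2 ∧ prin b ⊆ p.2)} ∈ S := by
    have hT : side true {p : Bool × Set B | (p.1 = true ∧ Idl p.2 ∧ prin a ⊆ p.2) ∨
        (p.1 = false ∧ Idl p.2 ∧ prin b ⊆ p.2)} = {X : Set B | Idl X ∧ prin a ⊆ X} := by
      ext X; simp [side]
    have hFa : side false {p : Bool × Set B | (p.1 = true ∧ Idl p.2 ∧ prin a ⊆ p.2) ∨
        (p.1 = false ∧ Idl p.2 ∧ prin b ⊆ p.2)} = {X : Set B | Idl X ∧ prin b ⊆ X} := by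
      ext X; simp [side]
    rw [hSdef, Set.mem_setOf_eq, hT, hFa]
    refine ⟨hFil0 a, hFil0 b, ⟨idl_prin a, subset_rfl⟩, ⟨idl_prin b, subset_rfl⟩, ?_⟩
    rintro X ⟨-, hX⟩ Y ⟨-, hY⟩
    exact ⟨a, hX (mem_prin_self a), b, hY (mem_prin_self b), hab⟩
  have hub : ∀ c ⊆ S, IsChain (· ⊆ ·) c → c.Nonempty → ∃ ub ∈ S, ∀ s ∈ c, s ⊆ ub := by
    intro c hc hchain hne
    obtain ⟨S₁, hS₁⟩ := hne
    have hside : ∀ t : Bool, side t (⋃₀ c) = ⋃₀ ((side t) '' c) := by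
      intro t; ext X
      constructor
      · rintro ⟨T, hT, hX⟩; exact ⟨side t T, ⟨T, hT, rfl⟩, hX⟩
      · rintro ⟨_, ⟨T, hT, rfl⟩, hX⟩; exact ⟨T, hT, hX⟩
    have hfil : ∀ t : Bool, (∀ T ∈ c, Fil (side t T)) → Fil (side t (⋃₀ c)) := by
      intro t hall
      rw [hside t]
      refine ⟨?_, ?_, ?_, ?_⟩
      · rintro X ⟨_, ⟨T, hT, rfl⟩, hX⟩; exact (hall T hT).1 X hX
      · rintro X ⟨_, ⟨T, hT, rfl⟩, hX⟩ Y hYi hXY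
        exact ⟨side t T, ⟨T, hT, rfl⟩, (hall T hT).2.1 X hX Y hYi hXY⟩
      · rintro X ⟨_, ⟨T, hT, rfl⟩, hX⟩ Y ⟨_, ⟨T', hT', rfl⟩, hY⟩
        rcases hchain.total hT hT' with h | h
        · exact ⟨side t T', ⟨T', hT', rfl⟩, (hall T' hT').2.2.1 X (h hX) Y hY⟩
        · exact ⟨side t T, ⟨T, hT, rfl⟩, (hall T hT).2.2.1 X hX Y (h hY)⟩
      · exact ⟨side t S₁, ⟨S₁, hS₁, rfl⟩, (hall S₁ hS₁).2.2.2⟩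
    refine ⟨⋃₀ c, ⟨hfil true (fun T hT => (hc hT).1), hfil false (fun T hT => (hc hT).2.1),
      ⟨S₁, hS₁, (hc hS₁).2.2.1⟩, ⟨S₁, hS₁, (hc hS₁).2.2.2.1⟩, ?_⟩,
      fun s hs => Set.subset_sUnion_of_mem hs⟩
    rintro X ⟨T, hT, hX⟩ Y ⟨T', hT', hY⟩
    rcases hchain.total hT hT' with h | h
    · exact (hc hT').2.2.2.2 X (h hX) Y hY
    · exact (hc hT).2.2.2.2 X hX Y (h hY)
  obtain ⟨M, -, hmax⟩ := zorn_subset_nonempty S hub _ h0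
  obtain ⟨⟨hFfil, hGfil, hpa, hpb, hR⟩, hmax2⟩ := hmax
  set F := side true M with hFdef
  set G := side false M with hGdef
  -- properness
  have hFproper : prin ⊥ ∉ F := by
    intro h
    obtain ⟨x, hx, y, -, hxy⟩ := hR _ h _ hpb
    exact h9 x y hxy (le_bot_iff.mp hx)
  have hGproper : prin ⊥ ∉ G := by
    intro h
    obtain ⟨x, -, y, hy, hxy⟩ := hR _ hpa _ h
    exact h9 y x (h10 x y hxy) (le_bot_iff.mp hy)
  -- extension failures
  have keyF : ∀ Z : Set B, Idl Z → Z ∉ F →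
      ∃ W ∈ F, ∃ Y₁ ∈ G, ¬ Chat C (W ∩ Z) Y₁ := by
    intro Z hZi hZn
    by_contra hk
    push_neg at hk
    have he := fil_extF hFfil hZi
    set M' : Set (Bool × Set B) :=
      {p | (p.1 = true ∧ p.2 ∈ extF F Z) ∨ (p.1 = false ∧ p.2 ∈ G)} with hM'def
    have hsT : side true M' = extF F Z := by ext X; simp [side, hM'def]
    have hsF : side false M' = G := by ext X; simp [side, hM'def]
    have hsub : M ⊆ M' := by
      rintro ⟨t, X⟩ hX
      cases t
      · exact Or.inr ⟨rfl, hX⟩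
      · exact Or.inl ⟨rfl, he.2.1 hX⟩
    have hin : M' ∈ S := by
      rw [hSdef, Set.mem_setOf_eq, hsT, hsF]
      refine ⟨he.1, hGfil, he.2.1 hpa, hpb, ?_⟩
      rintro X ⟨-, W, hW, hWZ⟩ Y hY
      exact chat_mono (hk W hW Y hY) hWZ subset_rfl
    have : M' ⊆ M := hmax2 hin hsub
    apply hZn
    have : (true, Z) ∈ M' := Or.inl ⟨rfl, he.2.2⟩
    exact hmax2 hin hsub this
  have keyG : ∀ Z : Set B, Idl Z → Z ∉ G →
      ∃ W ∈ G, ∃ X₁ ∈ F, ¬ Chat C X₁ (W ∩ Z) := by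
    intro Z hZi hZn
    by_contra hk
    push_neg at hk
    have he := fil_extF hGfil hZi
    set M' : Set (Bool × Set B) :=
      {p | (p.1 = true ∧ p.2 ∈ F) ∨ (p.1 = false ∧ p.2 ∈ extF G Z)} with hM'def
    have hsT : side true M' = F := by ext X; simp [side, hM'def]
    have hsF : side false M' = extF G Z := by ext X; simp [side, hM'def]
    have hsub : M ⊆ M' := by
      rintro ⟨t, X⟩ hX
      cases t
      · exact Or.inr ⟨rfl, he.2.1 hX⟩
      · exact Or.inl ⟨rfl, hX⟩
    have hin : M' ∈ S := by
      rw [hSdef, Set.mem_setOf_eq, hsT, hsF]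
      refine ⟨hFfil, he.1, hpa, he.2.1 hpb, ?_⟩
      rintro X hX Y ⟨-, W, hW, hWZ⟩
      exact chat_mono (hk W hW X hX) subset_rfl hWZ
    apply hZn
    have : (false, Z) ∈ M' := Or.inr ⟨rfl, he.2.2⟩
    exact hmax2 hin hsub this
  -- primeness of F
  have hFprime : ∀ X Y : Set B, Idl X → Idl Y → jn X Y ∈ F → X ∈ F ∨ Y ∈ F := by
    intro X Y hXi hYi hXY
    by_contra hcon
    push_neg at hcon
    obtain ⟨hXn, hYn⟩ := hcon
    obtain ⟨W₁, hW₁, Y₁, hY₁, hc₁⟩ := keyF X hXi hXn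
    obtain ⟨W₂, hW₂, Y₂, hY₂, hc₂⟩ := keyF Y hYi hYn
    have hWW : W₁ ∩ W₂ ∈ F := hFfil.2.2.1 _ hW₁ _ hW₂
    have hV : (W₁ ∩ W₂) ∩ jn X Y ∈ F := hFfil.2.2.1 _ hWW _ hXY
    have hY' : Y₁ ∩ Y₂ ∈ G := hGfil.2.2.1 _ hY₁ _ hY₂
    obtain ⟨v, hv, y, hy, hvy⟩ := hR _ hV _ hY'
    obtain ⟨i, ⟨hiW, hiX⟩, j, ⟨hjW, hjY⟩, hveq⟩ :=
      split had (idl_inter (hFfil.1 _ hW₁) (hFfil.1 _ hW₂)) hXi hYi hv.1 hv.2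
    have : C y (i ⊔ j) := by rw [← hveq]; exact h10 v y hvy
    rcases h11 y i j this with h | h
    · exact hc₁ ⟨i, ⟨hiW.1, hiX⟩, y, hy.1, h10 y i h⟩
    · exact hc₂ ⟨j, ⟨hjW.2, hjY⟩, y, hy.2, h10 y j h⟩
  -- primeness of G
  have hGprime : ∀ X Y : Set B, Idl X → Idl Y → jn X Y ∈ G → X ∈ G ∨ Y ∈ G := by
    intro X Y hXi hYi hXY
    by_contra hcon
    push_neg at hcon
    obtain ⟨hXn, hYn⟩ := hcon
    obtain ⟨W₁, hW₁, X₁, hX₁, hc₁⟩ := keyG X hXi hXn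
    obtain ⟨W₂, hW₂, X₂, hX₂, hc₂⟩ := keyG Y hYi hYn
    have hWW : W₁ ∩ W₂ ∈ G := hGfil.2.2.1 _ hW₁ _ hW₂
    have hV : (W₁ ∩ W₂) ∩ jn X Y ∈ G := hGfil.2.2.1 _ hWW _ hXY
    have hX' : X₁ ∩ X₂ ∈ F := hFfil.2.2.1 _ hX₁ _ hX₂
    obtain ⟨x, hx, v, hv, hxv⟩ := hR _ hX' _ hV
    obtain ⟨i, ⟨hiW, hiX⟩, j, ⟨hjW, hjY⟩, hveq⟩ :=
      split had (idl_inter (hGfil.1 _ hW₁) (hGfil.1 _ hW₂)) hXi hYi hv.1 hv.2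
    have : C x (i ⊔ j) := by rw [← hveq]; exact hxv
    rcases h11 x i j this with h | h
    · exact hc₁ ⟨x, hx.1, i, ⟨hiW.1, hiX⟩, h⟩
    · exact hc₂ ⟨x, hx.2, j, ⟨hjW.2, hjY⟩, h⟩
  exact ⟨F, G, ⟨hFfil, hFprime, hFproper⟩, ⟨hGfil, hGprime, hGproper⟩, hpa, hpb, hR⟩

end Zorn

end DCJS

/-- Relational representation theorem of DCJS: every distributive
contact join-semilattice embeds isomorphically into the relational contact
algebra of all subsets of some set `W` over a relational system `(W, R)` with
`R` reflexive and symmetric. -/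
theorem stmt_18 {B : Type u} [SemilatticeSup B] [OrderBot B] [OrderTop B]
    (C : B → B → Prop)
    (h9 : ∀ a b : B, C a b → a ≠ ⊥)
    (h10 : ∀ a b : B, C a b → C b a)
    (h11 : ∀ a b c : B, C a (b ⊔ c) → C a b ∨ C a c)
    (h12 : ∀ a b b' : B, C a b → b ≤ b' → C a b')
    (h13 : ∀ a : B, a ≠ ⊥ → C a a)
    (had : ∀ x a b : B, x ≤ a ⊔ b → ∃ a' b' : B, a' ≤ a ∧ b' ≤ b ∧ x = a' ⊔ b') :
    ∃ (W : Type u) (R : W → W → Prop),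
      Reflexive R ∧ Symmetric R ∧
      ∃ h : B → Set W,
        Function.Injective h ∧
        h ⊥ = ∅ ∧ h ⊤ = Set.univ ∧
        (∀ a b : B, h (a ⊔ b) = h a ∪ h b) ∧
        (∀ a b : B, a ≤ b ↔ h a ⊆ h b) ∧
        (∀ a b : B, C a b ↔ ∃ x ∈ h a, ∃ y ∈ h b, R x y) := by
  classical
  have horder : ∀ a b : B, a ≤ b ↔ DCJS.hmap a ⊆ DCJS.hmap b := by
    intro a b
    constructor
    · intro hab F hF
      exact F.2.1.2.1 _ hF _ (DCJS.idl_prin b) (DCJS.prin_mono hab)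
    · intro hsub
      by_contra hab
      obtain ⟨F, hFfil, hFprime, hFproper, hpa, hpb⟩ := DCJS.zornA had hab
      have hmem : (⟨F, hFfil, hFprime, hFproper⟩ : DCJS.Pt B) ∈ DCJS.hmap a := hpa
      exact hpb (hsub hmem)
  refine ⟨DCJS.Pt B, DCJS.Rel C, ?_, ?_, DCJS.hmap, ?_, ?_, ?_, ?_, fun a b => horder a b, ?_⟩
  case _ => -- Reflexive
    intro F X hX Y hY
    have hXY : X ∩ Y ∈ F.1 := F.2.1.2.2.1 X hX Y hY
    have hsub : DCJS.prin (⊥ : B) ⊆ X ∩ Y :=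
      DCJS.prin_bot_subset (DCJS.idl_inter (F.2.1.1 X hX) (F.2.1.1 Y hY))
    have hne : ¬ (X ∩ Y ⊆ DCJS.prin (⊥ : B)) := by
      intro h
      have heq : X ∩ Y = DCJS.prin (⊥ : B) := Set.Subset.antisymm h hsub
      rw [heq] at hXY
      exact F.2.2.2 hXY
    obtain ⟨c, hc, hcb⟩ := Set.not_subset.mp hne
    have hcne : c ≠ ⊥ := fun h => hcb (by simp [DCJS.prin, h])
    exact ⟨c, hc.1, c, hc.2, h13 c hcne⟩
  case _ => -- Symmetric
    intro F G hFG X hX Y hY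
    obtain ⟨x, hx, y, hy, hxy⟩ := hFG Y hY X hX
    exact ⟨y, hy, x, hx, h10 x y hxy⟩
  case _ => -- injective
    intro a b hab
    exact le_antisymm ((horder a b).2 (by rw [hab])) ((horder b a).2 (by rw [hab]))
  case _ => -- h ⊥ = ∅
    ext F
    simp only [DCJS.hmap, Set.mem_setOf_eq, Set.mem_empty_iff_false, iff_false]
    exact F.2.2.2
  case _ => -- h ⊤ = univ
    ext F
    simp only [DCJS.hmap, Set.mem_setOf_eq, Set.mem_univ, iff_true]
    have : DCJS.prin (⊤ : B) = Set.univ := by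
      ext x; simp [DCJS.prin, le_top]
    rw [this]
    exact F.2.1.2.2.2
  case _ => -- sup
    intro a b
    ext F
    simp only [DCJS.hmap, Set.mem_setOf_eq, Set.mem_union]
    constructor
    · intro h
      rw [DCJS.prin_sup] at h
      exact F.2.2.1 _ _ (DCJS.idl_prin a) (DCJS.idl_prin b) h
    · rintro (h | h)
      · exact F.2.1.2.1 _ h _ (DCJS.idl_prin (a ⊔ b)) (DCJS.prin_mono le_sup_left)
      · exact F.2.1.2.1 _ h _ (DCJS.idl_prin (a ⊔ b)) (DCJS.prin_mono le_sup_right)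
  case _ => -- contact
    intro a b
    constructor
    · intro hab
      obtain ⟨F, G, hFp, hGp, hpa, hpb, hR⟩ := DCJS.zornB had h9 h10 h11 hab
      exact ⟨⟨F, hFp⟩, hpa, ⟨G, hGp⟩, hpb, hR⟩
    · rintro ⟨F, hFa, G, hGb, hR⟩
      obtain ⟨x, hx, y, hy, hxy⟩ := hR _ hFa _ hGb
      have h1 : C x b := h12 x y b hxy hy
      have h2 : C b x := h10 x b h1
      have h3 : C b a := h12 b x a h2 hx
      exact h10 b a h3
end

section
/- (Topological representation theorem of DCJS) Let B be a distributive contact join-semilattice. Then there exist a compact, semiregular, T₀ topological space X and a map h from B to the regular closed subsets of X such that h is injective, h(0) = ∅, h(1) = X, h(a + b) = h(a) ∪ h(b) for all a, b, a ≤ b iff h(a) ⊆ h(b), and aCb iff h(a) ∩ h(b) ≠ ∅. -/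
/-!
The DCJS is embedded into a contact relation on a powerset, which is then represented by its clans.
The points of the powerset are the prime filters of the lattice of ideals of `B`, which (ad) makes
distributive; by Stone's theorem `a ↦ {p | ↓a ∈ p}` is then an order embedding preserving `⊥`,
`⊤` and `⊔`. Two sets of points are in contact when any two ideals covering them contain a
`C`-related pair. The clans of this contact relation, with the sets `{Γ | u ∈ Γ}` as closed
subbasis, form the space: every clan contains `u` or `uᶜ`, which makes these sets regular closed;
an ultrafilter `𝒰` of clans converges to the clan of all `u` with `{Γ | u ∈ Γ} ∈ 𝒰`; and a contact
pair `u, v` lies in the clan `U ∪ V` built from an ultrafilter `U ∋ u` in contact with `v` and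
an ultrafilter `V ∋ v` in contact with every member of `U`.
-/

open Set Filter TopologicalSpace Topology

variable {α : Type*}

structure IsContactRel (R : Set α → Set α → Prop) : Prop where
  not_empty_left (v : Set α) : ¬ R ∅ v
  symm {u v : Set α} : R u v → R v u
  mono_right {u v w : Set α} : v ⊆ w → R u v → R u w
  union_right {u v w : Set α} : R u (v ∪ w) → R u v ∨ R u w
  of_inter_nonempty {u v : Set α} : (u ∩ v).Nonempty → R u v

namespace IsContactRel

variable {R : Set α → Set α → Prop} (hR : IsContactRel R) {u v w : Set α}
include hR

lemma mono_left (huw : u ⊆ w) (h : R u v) : R w v :=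
  hR.symm (hR.mono_right huw (hR.symm h))

lemma union_left (h : R (u ∪ v) w) : R u w ∨ R v w :=
  (hR.union_right (hR.symm h)).imp hR.symm hR.symm

end IsContactRel

-- The sets failing `Q` form an ideal, so `u` and the complements of its members generate a proper
-- filter.
lemma Ultrafilter.exists_mem_forall_of_mono_of_union {Q : Set α → Prop} (hempty : ¬ Q ∅)
    (hmono : ∀ ⦃s t⦄, s ⊆ t → Q s → Q t) (hunion : ∀ ⦃s t⦄, Q (s ∪ t) → Q s ∨ Q t)
    {u : Set α} (hu : Q u) : ∃ U : Ultrafilter α, u ∈ U ∧ ∀ s ∈ U, Q s := by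
  let F : Filter α := comk (fun s => ¬ Q s) hempty (fun t ht s hst hs => ht (hmono hst hs))
    (fun s hs t ht hst => (hunion hst).elim hs ht)
  have : (F ⊓ 𝓟 u).NeBot := inf_principal_neBot_iff.2 fun s hs =>
    not_not.1 fun hne => hs (hmono (fun x hx => fun hxs => hne ⟨x, hxs, hx⟩) hu)
  obtain ⟨U, hU⟩ := Ultrafilter.exists_le (F ⊓ 𝓟 u)
  refine ⟨U, hU (mem_inf_of_right (mem_principal_self u)), fun s hs => not_not.1 fun hQ => ?_⟩
  have : sᶜ ∈ U := hU (mem_inf_of_left (by simpa [F] using hQ))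
  exact U.compl_mem_iff_notMem.1 this hs

structure Clan (R : Set α → Set α → Prop) where
  carrier : Set (Set α)
  univ_mem' : univ ∈ carrier
  mem_of_subset' {u v : Set α} : u ∈ carrier → u ⊆ v → v ∈ carrier
  mem_or_mem' {u v : Set α} : u ∪ v ∈ carrier → u ∈ carrier ∨ v ∈ carrier
  rel' {u v : Set α} : u ∈ carrier → v ∈ carrier → R u v

namespace Clan

variable {R : Set α → Set α → Prop}

instance : SetLike (Clan R) (Set α) where
  coe := carrier
  coe_injective Γ Δ h := by cases Γ; cases Δ; congr

variable (Γ : Clan R) {u v : Set α}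

lemma univ_mem : univ ∈ Γ := Γ.univ_mem'

lemma mem_of_subset (hu : u ∈ Γ) (huv : u ⊆ v) : v ∈ Γ := Γ.mem_of_subset' hu huv

lemma mem_or_mem (h : u ∪ v ∈ Γ) : u ∈ Γ ∨ v ∈ Γ := Γ.mem_or_mem' h

lemma rel (hu : u ∈ Γ) (hv : v ∈ Γ) : R u v := Γ.rel' hu hv

lemma mem_or_compl_mem (u : Set α) : u ∈ Γ ∨ uᶜ ∈ Γ :=
  Γ.mem_or_mem (by rw [union_compl_self]; exact Γ.univ_mem)

variable {Γ}

def ofUltrafilters (hR : IsContactRel R) (U V : Ultrafilter α) (hUV : ∀ s ∈ U, ∀ t ∈ V, R s t) :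
    Clan R where
  carrier := {s | s ∈ U ∨ s ∈ V}
  univ_mem' := Or.inl Filter.univ_mem
  mem_of_subset' hu huv := hu.imp (mem_of_superset · huv) (mem_of_superset · huv)
  mem_or_mem' h := by
    rcases h with h | h
    · exact (U.union_mem_iff.1 h).imp Or.inl Or.inl
    · exact (V.union_mem_iff.1 h).imp Or.inr Or.inr
  rel' := by
    rintro s t (hs | hs) (ht | ht)
    · exact hR.of_inter_nonempty (U.nonempty_of_mem (inter_mem hs ht))
    · exact hUV s hs t ht
    · exact hR.symm (hUV t ht s hs)
    · exact hR.of_inter_nonempty (V.nonempty_of_mem (inter_mem hs ht))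

lemma mem_ofUltrafilters {hR : IsContactRel R} {U V : Ultrafilter α} {hUV} :
    u ∈ ofUltrafilters hR U V hUV ↔ u ∈ U ∨ u ∈ V := Iff.rfl

def principal (hR : IsContactRel R) (z : α) : Clan R :=
  ofUltrafilters hR (pure z) (pure z)
    fun _ hs _ ht => hR.of_inter_nonempty ⟨z, hs, ht⟩

lemma mem_principal (hR : IsContactRel R) (z : α) : u ∈ principal hR z ↔ z ∈ u := by
  simp [principal, mem_ofUltrafilters]

lemma exists_mem_mem_of_rel (hR : IsContactRel R) (h : R u v) : ∃ Γ : Clan R, u ∈ Γ ∧ v ∈ Γ := by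
  obtain ⟨U, huU, hU⟩ := Ultrafilter.exists_mem_forall_of_mono_of_union (hR.not_empty_left v)
    (fun _ _ => hR.mono_left) (fun _ _ => hR.union_left) h
  have hempty : ¬ ∀ s ∈ U, R s ∅ := fun h => hR.not_empty_left _ (hR.symm (h u huU))
  have hunion : ∀ ⦃t t' : Set α⦄, (∀ s ∈ U, R s (t ∪ t')) →
      (∀ s ∈ U, R s t) ∨ ∀ s ∈ U, R s t' := by
    intro t t' h
    by_contra! ⟨⟨s, hs, hst⟩, s', hs', hst'⟩
    rcases hR.union_right (h _ (inter_mem hs hs')) with h' | h'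
    · exact hst (hR.mono_left inter_subset_left h')
    · exact hst' (hR.mono_left inter_subset_right h')
  obtain ⟨V, hvV, hV⟩ := Ultrafilter.exists_mem_forall_of_mono_of_union
    (Q := fun t => ∀ s ∈ U, R s t) hempty
    (fun _ _ htt' h s hs => hR.mono_right htt' (h s hs)) hunion hU
  exact ⟨ofUltrafilters hR U V fun s hs t ht => hV t ht s hs, Or.inl huU, Or.inr hvV⟩

variable (R) in
def containing (u : Set α) : Set (Clan R) := {Γ | u ∈ Γ}

instance : TopologicalSpace (Clan R) := generateFrom (range fun u => (containing R u)ᶜ)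

lemma containing_univ : containing R univ = univ :=
  eq_univ_of_forall univ_mem

lemma containing_empty (hR : IsContactRel R) : containing R ∅ = ∅ :=
  eq_empty_of_forall_notMem fun Γ h => hR.not_empty_left _ (Γ.rel h h)

lemma containing_union (u v : Set α) :
    containing R (u ∪ v) = containing R u ∪ containing R v :=
  Subset.antisymm (fun Γ h => Γ.mem_or_mem h) <| union_subset
    (fun Γ h => Γ.mem_of_subset h subset_union_left)
    (fun Γ h => Γ.mem_of_subset h subset_union_right)

lemma containing_subset_containing_iff (hR : IsContactRel R) :
    containing R u ⊆ containing R v ↔ u ⊆ v :=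
  ⟨fun h z hz => (mem_principal hR z).1
      (h (show principal hR z ∈ containing R u from (mem_principal hR z).2 hz)),
    fun huv Γ hu => Γ.mem_of_subset hu huv⟩

lemma isClosed_containing (u : Set α) : IsClosed (containing R u) :=
  ⟨isOpen_generateFrom_of_mem ⟨u, rfl⟩⟩

lemma isTopologicalBasis_compl_containing (hR : IsContactRel R) :
    IsTopologicalBasis (range fun u => (containing R u)ᶜ) := by
  refine isTopologicalBasis_of_subbasis_of_finiteInter rfl ⟨⟨∅, by simp [containing_empty hR]⟩, ?_⟩
  rintro _ ⟨u, rfl⟩ _ ⟨v, rfl⟩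
  exact ⟨u ∪ v, by simp [containing_union, compl_union]⟩

lemma closure_compl_containing (hR : IsContactRel R) (u : Set α) :
    closure (containing R u)ᶜ = containing R uᶜ := by
  refine Subset.antisymm (closure_minimal (fun Γ h => (Γ.mem_or_compl_mem u).resolve_left h)
    (isClosed_containing _)) fun Γ hΓ => ?_
  rw [(isTopologicalBasis_compl_containing hR).mem_closure_iff]
  rintro _ ⟨w, rfl⟩ hw
  obtain ⟨z, hzu, hzw⟩ := not_subset.1 fun h => hw (Γ.mem_of_subset hΓ h)
  exact ⟨principal hR z, mt (mem_principal hR z).1 hzw, mt (mem_principal hR z).1 hzu⟩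

lemma interior_containing (hR : IsContactRel R) (u : Set α) :
    interior (containing R u) = (containing R uᶜ)ᶜ := by
  rw [← closure_compl_containing hR, closure_compl, compl_compl]

lemma closure_interior_containing (hR : IsContactRel R) (u : Set α) :
    closure (interior (containing R u)) = containing R u := by
  rw [interior_containing hR, closure_compl_containing hR, compl_compl]

lemma interior_closure_compl_containing (hR : IsContactRel R) (u : Set α) :
    interior (closure (containing R u)ᶜ) = (containing R u)ᶜ := by
  rw [closure_compl_containing hR, interior_containing hR, compl_compl]

lemma isTopologicalBasis_regularOpen (hR : IsContactRel R) :
    IsTopologicalBasis {v : Set (Clan R) | v = interior (closure v)} := by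
  refine (isTopologicalBasis_compl_containing hR).of_isOpen_of_subset
    (fun v hv => hv ▸ isOpen_interior) ?_
  rintro _ ⟨u, rfl⟩
  exact (interior_closure_compl_containing hR u).symm

instance : T0Space (Clan R) :=
  (t0Space_iff_inseparable _).2 fun _ _ h =>
    SetLike.ext fun u => h.mem_closed_iff (isClosed_containing u)

def limit (𝒰 : Ultrafilter (Clan R)) : Clan R where
  carrier := {u | containing R u ∈ 𝒰}
  univ_mem' := by rw [mem_ofPred_eq, containing_univ]; exact Filter.univ_mem
  mem_of_subset' hu huv := mem_of_superset hu fun Γ h => Γ.mem_of_subset h huv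
  mem_or_mem' h := by rwa [mem_ofPred_eq, containing_union, Ultrafilter.union_mem_iff] at h
  rel' hu hv := by
    obtain ⟨Γ, hΓu, hΓv⟩ := 𝒰.nonempty_of_mem (inter_mem hu hv)
    exact Γ.rel hΓu hΓv

lemma le_nhds_limit (𝒰 : Ultrafilter (Clan R)) : (𝒰 : Filter (Clan R)) ≤ 𝓝 (limit 𝒰) := by
  rw [nhds_generateFrom]
  refine le_iInf₂ fun s ⟨hs, w, hw⟩ => ?_
  subst hw
  exact le_principal_iff.2 (𝒰.compl_mem_iff_notMem.2 hs)

instance : CompactSpace (Clan R) :=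
  ⟨isCompact_iff_ultrafilter_le_nhds.2 fun 𝒰 _ => ⟨limit 𝒰, mem_univ _, le_nhds_limit 𝒰⟩⟩

lemma rel_iff_containing_inter_nonempty (hR : IsContactRel R) :
    R u v ↔ (containing R u ∩ containing R v).Nonempty :=
  ⟨exists_mem_mem_of_rel hR, fun ⟨Γ, hu, hv⟩ => Γ.rel hu hv⟩

end Clan

namespace Order.Ideal

section Stone

variable {L : Type*} [Lattice L]

def stoneSet (x : L) : Set (PrimePair L) := {p | x ∈ p.F}

lemma PrimePair.mem_I_iff_notMem_F (p : PrimePair L) {x : L} : x ∈ p.I ↔ x ∉ p.F :=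
  (Set.ext_iff.1 p.compl_F_eq_I x).symm

lemma stoneSet_mono {x y : L} (h : x ≤ y) : stoneSet x ⊆ stoneSet y :=
  fun _ => PFilter.mem_of_le h

lemma stoneSet_inf (x y : L) : stoneSet (x ⊓ y) = stoneSet x ∩ stoneSet y :=
  Set.ext fun _ => PFilter.inf_mem_iff

lemma stoneSet_sup (x y : L) : stoneSet (x ⊔ y) = stoneSet x ∪ stoneSet y := by
  ext p
  simp only [stoneSet, mem_union, mem_ofPred_eq, ← not_iff_not, not_or, ← p.mem_I_iff_notMem_F,
    sup_mem_iff]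

lemma stoneSet_bot [OrderBot L] : stoneSet (⊥ : L) = ∅ :=
  eq_empty_of_forall_notMem fun p => (p.mem_I_iff_notMem_F).1 p.I.bot_mem

lemma stoneSet_top [OrderTop L] : stoneSet (⊤ : L) = univ :=
  eq_univ_of_forall fun _ => PFilter.top_mem

end Stone

section DistribLattice

variable {L : Type*} [DistribLattice L]

lemma exists_primePair_mem_notMem {x y : L} (h : ¬ x ≤ y) :
    ∃ p : PrimePair L, x ∈ p.F ∧ y ∉ p.F := by
  obtain ⟨J, hJ, hyJ, hxJ⟩ := DistribLattice.prime_ideal_of_disjoint_filter_ideal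
    (F := PFilter.principal x) (I := principal y)
    (disjoint_left.2 fun z hxz hzy => h (le_trans hxz hzy))
  refine ⟨hJ.toPrimePair, ?_, ?_⟩
  · exact disjoint_left.1 hxJ (PFilter.mem_principal.2 le_rfl)
  · exact (hJ.toPrimePair.mem_I_iff_notMem_F).1 (principal_le_iff.1 hyJ)

lemma stoneSet_subset_stoneSet_iff {x y : L} :
    stoneSet x ⊆ stoneSet y ↔ x ≤ y := by
  refine ⟨fun hxy => not_not.1 fun h => ?_, stoneSet_mono⟩
  obtain ⟨p, hx, hy⟩ := exists_primePair_mem_notMem h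
  exact hy (hxy hx)

end DistribLattice

variable {B : Type*} [SemilatticeSup B] [OrderBot B]

lemma principal_sup (a b : B) : principal (a ⊔ b) = principal a ⊔ principal b :=
  le_antisymm (principal_le_iff.2 ⟨a, mem_principal_self, b, mem_principal_self, le_rfl⟩)
    (sup_le (principal_le_iff.2 (mem_principal.2 le_sup_left))
      (principal_le_iff.2 (mem_principal.2 le_sup_right)))

abbrev distribLatticeOfDecompose
    (had : ∀ x a b : B, x ≤ a ⊔ b → ∃ a' b' : B, a' ≤ a ∧ b' ≤ b ∧ x = a' ⊔ b') :
    DistribLattice (Ideal B) :=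
  DistribLattice.ofInfSupLe fun I J K x hx => by
    obtain ⟨hxI, j, hj, k, hk, hxjk⟩ := mem_inf.1 hx
    obtain ⟨j', k', hj', hk', rfl⟩ := had x j k hxjk
    exact mem_sup.2 ⟨j', mem_inf.2 ⟨I.lower le_sup_left hxI, J.lower hj' hj⟩,
      k', mem_inf.2 ⟨I.lower le_sup_right hxI, K.lower hk' hk⟩, le_rfl⟩

lemma stoneSet_principal_subset_iff
    (had : ∀ x a b : B, x ≤ a ⊔ b → ∃ a' b' : B, a' ≤ a ∧ b' ≤ b ∧ x = a' ⊔ b')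
    {a : B} {I : Ideal B} : stoneSet (principal a) ⊆ stoneSet I ↔ a ∈ I := by
  let := distribLatticeOfDecompose had
  exact stoneSet_subset_stoneSet_iff.trans principal_le_iff

def idealContact (C : B → B → Prop) (u v : Set (PrimePair (Ideal B))) : Prop :=
  ∀ I J : Ideal B, u ⊆ stoneSet I → v ⊆ stoneSet J → ∃ x ∈ I, ∃ y ∈ J, C x y

lemma isContactRel_idealContact {C : B → B → Prop}
    (h9 : ∀ a b : B, C a b → a ≠ ⊥)
    (h10 : ∀ a b : B, C a b → C b a)
    (h11 : ∀ a b c : B, C a (b ⊔ c) → C a b ∨ C a c)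
    (h12 : ∀ a b b' : B, C a b → b ≤ b' → C a b')
    (h13 : ∀ a : B, a ≠ ⊥ → C a a) :
    IsContactRel (idealContact C) where
  not_empty_left v h := by
    obtain ⟨x, hx, y, -, hxy⟩ := h (principal ⊥) ⊤ (empty_subset _) fun _ _ => PFilter.top_mem
    exact h9 x y hxy (le_bot_iff.1 (mem_principal.1 hx))
  symm h I J hvI huJ := by
    obtain ⟨x, hx, y, hy, hxy⟩ := h J I huJ hvI
    exact ⟨y, hy, x, hx, h10 x y hxy⟩
  mono_right hvw h I J huI hwJ := h I J huI (hvw.trans hwJ)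
  union_right {u v w} h := by
    by_contra! ⟨hv, hw⟩
    simp only [idealContact, not_forall] at hv hw
    obtain ⟨I, J, huI, hvJ, hIJ⟩ := hv
    obtain ⟨I', J', huI', hwJ', hIJ'⟩ := hw
    obtain ⟨x, hx, y, hy, hxy⟩ := h (I ⊓ I') (J ⊔ J')
      (stoneSet_inf I I' ▸ subset_inter huI huI') (stoneSet_sup J J' ▸ union_subset_union hvJ hwJ')
    obtain ⟨j, hj, j', hj', hyj⟩ := mem_sup.1 hy
    rcases h11 x j j' (h12 x y _ hxy hyj) with hxj | hxj'
    · exact hIJ ⟨x, (mem_inf.1 hx).1, j, hj, hxj⟩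
    · exact hIJ' ⟨x, (mem_inf.1 hx).2, j', hj', hxj'⟩
  of_inter_nonempty := by
    rintro u v ⟨p, hpu, hpv⟩ I J huI hvJ
    have hp : p ∈ stoneSet (I ⊓ J) := stoneSet_inf I J ▸ ⟨huI hpu, hvJ hpv⟩
    obtain ⟨x, hx, hx0⟩ : ∃ x ∈ I ⊓ J, x ≠ ⊥ := by
      by_contra! h
      refine (stoneSet_bot (L := Ideal B)).subset (stoneSet_mono (fun x hx => ?_) hp)
      exact (h x hx).symm ▸ bot_mem _
    exact ⟨x, (mem_inf.1 hx).1, x, (mem_inf.1 hx).2, h13 x hx0⟩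

lemma idealContact_stoneSet_principal_iff {C : B → B → Prop}
    (h10 : ∀ a b : B, C a b → C b a)
    (h12 : ∀ a b b' : B, C a b → b ≤ b' → C a b')
    (had : ∀ x a b : B, x ≤ a ⊔ b → ∃ a' b' : B, a' ≤ a ∧ b' ≤ b ∧ x = a' ⊔ b') {a b : B} :
    idealContact C (stoneSet (principal a)) (stoneSet (principal b)) ↔ C a b := by
  refine ⟨fun h => ?_, fun h I J haI hbJ => ⟨a, (stoneSet_principal_subset_iff had).1 haI,
    b, (stoneSet_principal_subset_iff had).1 hbJ, h⟩⟩
  obtain ⟨x, hx, y, hy, hxy⟩ := h _ _ subset_rfl subset_rfl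
  exact h12 _ _ _ (h10 _ _ (h12 _ _ _ (h10 _ _ hxy) (mem_principal.1 hx))) (mem_principal.1 hy)

end Order.Ideal

open Order.Ideal in
/-- Topological representation theorem of DCJS: every distributive
contact join-semilattice embeds isomorphically into the regular closed subsets
of some compact, semiregular, T₀ topological space, with contact given by
nonempty intersection. Semiregularity means that the regular open sets
(`u = interior (closure u)`) form a base of the topology. -/
theorem stmt_19 {B : Type u} [SemilatticeSup B] [OrderBot B] [OrderTop B]
    (C : B → B → Prop)
    (h9 : ∀ a b : B, C a b → a ≠ ⊥)
    (h10 : ∀ a b : B, C a b → C b a)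
    (h11 : ∀ a b c : B, C a (b ⊔ c) → C a b ∨ C a c)
    (h12 : ∀ a b b' : B, C a b → b ≤ b' → C a b')
    (h13 : ∀ a : B, a ≠ ⊥ → C a a)
    (had : ∀ x a b : B, x ≤ a ⊔ b → ∃ a' b' : B, a' ≤ a ∧ b' ≤ b ∧ x = a' ⊔ b') :
    ∃ (X : Type u) (_ : TopologicalSpace X),
      CompactSpace X ∧ T0Space X ∧
      TopologicalSpace.IsTopologicalBasis {v : Set X | v = interior (closure v)} ∧
      ∃ h : B → Set X,
        (∀ a : B, h a = closure (interior (h a))) ∧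
        Function.Injective h ∧
        h ⊥ = ∅ ∧ h ⊤ = Set.univ ∧
        (∀ a b : B, h (a ⊔ b) = h a ∪ h b) ∧
        (∀ a b : B, a ≤ b ↔ h a ⊆ h b) ∧
        (∀ a b : B, C a b ↔ (h a ∩ h b).Nonempty) := by
  have hR := isContactRel_idealContact h9 h10 h11 h12 h13
  let h (a : B) : Set (Clan (idealContact C)) := Clan.containing _ (stoneSet (principal a))
  have h_le_iff (a b : B) : a ≤ b ↔ h a ⊆ h b := by
    rw [Clan.containing_subset_containing_iff hR, stoneSet_principal_subset_iff had,
      Order.Ideal.mem_principal]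
  refine ⟨Clan (idealContact C), inferInstance, inferInstance, inferInstance,
    Clan.isTopologicalBasis_regularOpen hR, h,
    fun a => (Clan.closure_interior_containing hR _).symm,
    fun a b hab => le_antisymm ((h_le_iff a b).2 hab.le) ((h_le_iff b a).2 hab.ge), ?_, ?_,
    fun a b => ?_, h_le_iff, fun a b => ?_⟩
  · simp only [h, principal_bot, stoneSet_bot, Clan.containing_empty hR]
  · simp only [h, principal_top, stoneSet_top, Clan.containing_univ]
  · simp only [h, principal_sup, stoneSet_sup, Clan.containing_union]
  · rw [← idealContact_stoneSet_principal_iff h10 h12 had,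
      Clan.rel_iff_containing_inter_nonempty hR]
end
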